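/- arXiv:1403.0354 — 7 statements merged into one kernel-verified Lean document; each statement's English description precedes it below -/
import Mathlib

section
/- Let X_1,…,X_M and Y_1,…,Y_M be 2M independent random variables, each exponentially distributed with rate 1, and let I be the (almost surely unique) index in {1,…,M} maximizing min(X_i, Y_i). Fix η > 0 and for ε > 0 set ε₁ = ε/η and P_o(ε) = P(X_I < ε) + P((X_I − ε)·Y_I < ε₁ and X_I > ε). Then lim_{ε→0⁺} log P_o(ε) / log ε = (M+1)/2; that is, the diversity order achieved by max-min user scheduling with an energy harvesting relay equals (M+1)/2. -/
open MeasureTheory ProbabilityTheory Filter Topology Set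
open scoped ENNReal

/-!
Write `Wᵢ = (Xᵢ, Yᵢ)`: these pairs are i.i.d. with law `Exp(1) ⊗ Exp(1)`, and
`min W_j ≤ min W_I` for every `j`. The event `X_I < ε` therefore forces all `M` minima below
`ε`, which costs `O(ε ^ M)`. The event `(X_I - ε) Y_I < ε / η` puts `W_I` under a hyperbola,
of probability `O((ε / η) ^ (1 - θ))` for every `θ > 0`, and forces the other `M - 1` minima
below `ε + √(ε / η)`; so `P_o(ε) = O(ε ^ ((M + 1) / 2 - θ))`. Conversely, one user with both
gains of order `√ε` and all other users with a smaller first gain realise the outage with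
probability of order `ε ^ ((M + 1) / 2)`. Taking logarithms gives the diversity order.
-/

namespace ProbabilityTheory

lemma expMeasure_eq_withDensity (r : ℝ) :
    expMeasure r = volume.withDensity (exponentialPDF r) := rfl

instance isProbabilityMeasure_expMeasure_one : IsProbabilityMeasure (expMeasure 1) :=
  isProbabilityMeasure_expMeasure one_pos

lemma expMeasure_one_le_volume : expMeasure 1 ≤ volume := by
  have h : exponentialPDF 1 ≤ᵐ[volume] 1 := Eventually.of_forall fun x ↦ by
    rw [exponentialPDF_eq]
    split_ifs with hx
    · exact ENNReal.ofReal_le_one.mpr (by simpa using hx)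
    · simp
  simpa [expMeasure_eq_withDensity] using withDensity_mono h

lemma ae_pos_expMeasure_one : ∀ᵐ x ∂expMeasure 1, 0 < x := by
  rw [ae_iff]
  simp_rw [not_lt]
  rw [show {x : ℝ | x ≤ 0} = Iic 0 from rfl, ← ofReal_cdf]
  simp [cdf_expMeasure_eq one_pos]

lemma expMeasure_one_Iio_le (t : ℝ) : expMeasure 1 (Iio t) ≤ ENNReal.ofReal t := by
  refine (measure_mono Iio_subset_Iic_self).trans ?_
  rw [← ofReal_cdf, cdf_expMeasure_eq one_pos]
  split_ifs with ht
  · exact ENNReal.ofReal_le_ofReal (by linarith [Real.add_one_le_exp (-(1 * t))])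
  · simp

lemma ofReal_exp_neg_one_mul_le_expMeasure_one_Ioc {a b : ℝ} (ha : 0 ≤ a) (hab : a ≤ b)
    (hb : b ≤ 1) : ENNReal.ofReal (Real.exp (-1) * (b - a)) ≤ expMeasure 1 (Ioc a b) := by
  rw [← measure_cdf (expMeasure 1), StieltjesFunction.measure_Ioc, cdf_expMeasure_eq one_pos,
    cdf_expMeasure_eq one_pos, if_pos ha, if_pos (ha.trans hab)]
  refine ENNReal.ofReal_le_ofReal ?_
  have hexp : Real.exp (-b) * (1 + (b - a)) ≤ Real.exp (-a) := by
    rw [show -a = -b + (b - a) by ring, Real.exp_add]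
    gcongr
    linarith [Real.add_one_le_exp (b - a)]
  have hb' : Real.exp (-1) ≤ Real.exp (-b) := Real.exp_le_exp.mpr (by linarith)
  simp only [one_mul]
  nlinarith [sub_nonneg.mpr hab]

lemma lintegral_rpow_neg_expMeasure_one_lt_top {s : ℝ} (hs : s < 1) :
    ∫⁻ x, ENNReal.ofReal (x ^ (-s)) ∂expMeasure 1 < ⊤ := by
  have hΓ := (Real.GammaIntegral_convergent (s := 1 - s) (by linarith)).lintegral_lt_top
  rw [show 1 - s - 1 = -s by ring] at hΓ
  rw [expMeasure_eq_withDensity, lintegral_withDensity_eq_lintegral_mul _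
    (show Measurable (exponentialPDF 1) from (measurable_exponentialPDFReal 1).ennreal_ofReal)
    (by fun_prop), ← lintegral_indicator measurableSet_Ioi] at *
  refine lt_of_le_of_lt (lintegral_mono_ae ?_) hΓ
  filter_upwards [ae_iff.2 (by simp : volume {x : ℝ | ¬ x ≠ 0} = 0)] with x hx
  rcases lt_or_gt_of_ne hx with h | h
  · simp [exponentialPDF_of_neg h, h.not_gt]
  · rw [indicator_of_mem (mem_Ioi.2 h), Pi.mul_apply, exponentialPDF_of_nonneg h.le,
      ← ENNReal.ofReal_mul (by positivity), one_mul, one_mul]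

lemma iIndepFun.prodMk_of_sumElim {Ω ι β : Type*} [MeasurableSpace Ω] {μ : Measure Ω}
    [IsProbabilityMeasure μ] [Fintype ι] [MeasurableSpace β] {X Y : ι → Ω → β}
    (hX : ∀ i, Measurable (X i)) (hY : ∀ i, Measurable (Y i))
    (h : iIndepFun (Sum.elim X Y) μ) :
    iIndepFun (fun i ω ↦ (X i ω, Y i ω)) μ := by
  have hXY : ∀ i, Measurable fun ω ↦ (X i ω, Y i ω) := fun i ↦ (hX i).prodMk (hY i)
  rw [iIndepFun_iff_map_fun_eq_pi_map fun i ↦ (hXY i).aemeasurable]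
  refine (Measure.pi_eq_generateFrom (fun _ ↦ generateFrom_prod) (fun _ ↦ isPiSystem_prod)
    (fun _ ↦ ⟨fun _ ↦ univ, fun _ ↦ ⟨univ, .univ, univ, .univ, univ_prod_univ⟩,
      fun _ ↦ measure_lt_top _ _, iUnion_const _⟩) fun s hs ↦ ?_).symm
  choose A hA B hB hAB using hs
  obtain rfl : s = fun i ↦ A i ×ˢ B i := funext fun i ↦ (hAB i).symm
  have hpre : (fun ω i ↦ (X i ω, Y i ω)) ⁻¹' univ.pi (fun i ↦ A i ×ˢ B i)
      = ⋂ k, Sum.elim X Y k ⁻¹' Sum.elim A B k := by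
    ext ω
    simp [Sum.forall, forall_and]
  rw [Measure.map_apply (measurable_pi_lambda _ hXY) (.univ_pi fun i ↦ (hA i).prod (hB i)), hpre,
    h.meas_iInter fun k ↦ ⟨Sum.elim A B k, by cases k; exacts [hA _, hB _], rfl⟩,
    Fintype.prod_sum_type, ← Finset.prod_mul_distrib]
  refine Finset.prod_congr rfl fun i _ ↦ ?_
  have hi : IndepFun (X i) (Y i) μ := h.indepFun Sum.inl_ne_inr
  rw [Measure.map_apply (hXY i) ((hA i).prod (hB i)), mk_preimage_prod,
    hi.measure_inter_preimage_eq_mul _ _ (hA i) (hB i)]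
  rfl

section LawOfIndependentFamily

variable {Ω ι γ : Type*} [MeasurableSpace Ω] [MeasurableSpace γ] [Fintype ι]
  {μ : Measure Ω} {ν : Measure γ} {W : ι → Ω → γ}

lemma iIndepFun.measure_iInter_preimage_eq_prod (hW : iIndepFun W μ)
    (hmW : ∀ i, Measurable (W i)) (hlaw : ∀ i, μ.map (W i) = ν) {C : ι → Set γ}
    (hC : ∀ i, MeasurableSet (C i)) :
    μ (⋂ i, W i ⁻¹' C i) = ∏ i, ν (C i) := by
  rw [hW.meas_iInter fun i ↦ ⟨C i, hC i, rfl⟩]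
  exact Finset.prod_congr rfl fun i _ ↦ by rw [← hlaw i, Measure.map_apply (hmW i) (hC i)]

lemma iIndepFun.measure_iInter_preimage_ite [DecidableEq ι] (hW : iIndepFun W μ)
    (hmW : ∀ i, Measurable (W i)) (hlaw : ∀ i, μ.map (W i) = ν) (i : ι) {A B : Set γ}
    (hA : MeasurableSet A) (hB : MeasurableSet B) :
    μ (⋂ j, W j ⁻¹' if j = i then A else B) = ν A * ν B ^ (Fintype.card ι - 1) := by
  rw [hW.measure_iInter_preimage_eq_prod hmW hlaw fun j ↦ by split_ifs <;> assumption,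
    ← Finset.mul_prod_erase _ _ (Finset.mem_univ i), if_pos rfl,
    Finset.prod_congr rfl fun j hj ↦ by rw [if_neg (Finset.ne_of_mem_erase hj)],
    Finset.prod_const, Finset.card_erase_of_mem (Finset.mem_univ i), Finset.card_univ]

end LawOfIndependentFamily

end ProbabilityTheory

namespace MaxMinScheduling

local notation "ν₂" => Measure.prod (expMeasure 1) (expMeasure 1)

lemma min_one_le_rpow {L s : ℝ} (hL : 0 ≤ L) (hs0 : 0 ≤ s) (hs1 : s ≤ 1) : min 1 L ≤ L ^ s := by
  rcases le_or_gt L 1 with h | h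
  · rw [min_eq_right h]
    simpa using Real.rpow_le_rpow_of_exponent_ge' hL h hs0 hs1
  · exact (min_le_left _ _).trans (Real.one_le_rpow h.le hs0)

lemma sqrt_pow_eq_rpow {x : ℝ} (hx : 0 ≤ x) (n : ℕ) : √x ^ n = x ^ ((n : ℝ) / 2) := by
  rw [Real.sqrt_eq_rpow, ← Real.rpow_natCast, ← Real.rpow_mul hx]
  ring_nf

lemma min_lt_add_sqrt_of_mul_lt {ε r x y : ℝ} (hε : 0 ≤ ε) (hr : 0 ≤ r)
    (h : (x - ε) * y < r) : min x y < ε + √r := by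
  by_contra! hge
  have hx : √r ≤ x - ε := by linarith [min_le_left x y]
  have hy : √r ≤ y := by linarith [min_le_right x y, Real.sqrt_nonneg r]
  have := mul_le_mul hx hy (Real.sqrt_nonneg r) (by linarith [Real.sqrt_nonneg r])
  rw [Real.mul_self_sqrt hr] at this
  linarith

lemma expMeasure_prod_setOf_min_lt_le (t : ℝ) :
    ν₂ {p : ℝ × ℝ | min p.1 p.2 < t} ≤ 2 * ENNReal.ofReal t := by
  have hsub : {p : ℝ × ℝ | min p.1 p.2 < t} ⊆ Iio t ×ˢ univ ∪ univ ×ˢ Iio t := fun p hp ↦ by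
    simpa [min_lt_iff] using hp
  calc ν₂ {p : ℝ × ℝ | min p.1 p.2 < t}
      ≤ ν₂ (Iio t ×ˢ univ) + ν₂ (univ ×ˢ Iio t) := (measure_mono hsub).trans (measure_union_le _ _)
    _ ≤ ENNReal.ofReal t + ENNReal.ofReal t := by
      simp only [Measure.prod_prod, measure_univ, mul_one, one_mul]
      gcongr <;> exact expMeasure_one_Iio_le t
    _ = 2 * ENNReal.ofReal t := (two_mul _).symm

/-- Bounding the measure `min 1 (r / y)` of the `x`-section by `(r / y) ^ s` trades the
logarithmic divergence of the `y`-integral (the true order is `r log (1 / r)`) for a power loss. -/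
lemma expMeasure_prod_hyperbola_le {ε r s : ℝ} (hr : 0 ≤ r) (hs0 : 0 ≤ s) (hs1 : s ≤ 1) :
    ν₂ {p : ℝ × ℝ | (p.1 - ε) * p.2 < r ∧ ε < p.1}
      ≤ ENNReal.ofReal (r ^ s) * ∫⁻ y, ENNReal.ofReal (y ^ (-s)) ∂expMeasure 1 := by
  have hmeas : MeasurableSet {p : ℝ × ℝ | (p.1 - ε) * p.2 < r ∧ ε < p.1} :=
    (measurableSet_lt (f := fun p : ℝ × ℝ ↦ (p.1 - ε) * p.2) (by fun_prop) measurable_const).inter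
      (measurableSet_lt measurable_const measurable_fst)
  rw [Measure.prod_apply_symm hmeas, ← lintegral_const_mul' _ _ ENNReal.ofReal_ne_top]
  refine lintegral_mono_ae ?_
  filter_upwards [ae_pos_expMeasure_one] with y hy
  have hslice : (fun x ↦ (x, y)) ⁻¹' {p : ℝ × ℝ | (p.1 - ε) * p.2 < r ∧ ε < p.1}
      ⊆ Ioo ε (ε + r / y) := fun x hx ↦ ⟨hx.2, by
    have := hx.1
    have : x - ε < r / y := by rwa [lt_div_iff₀ hy]
    linarith⟩
  calc expMeasure 1 ((fun x ↦ (x, y)) ⁻¹' _)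
      ≤ min 1 (ENNReal.ofReal (r / y)) := le_min prob_le_one <| (measure_mono hslice).trans <|
        (expMeasure_one_le_volume _).trans (by simp [Real.volume_Ioo])
    _ = ENNReal.ofReal (min 1 (r / y)) := by rw [ENNReal.ofReal_min, ENNReal.ofReal_one]
    _ ≤ ENNReal.ofReal ((r / y) ^ s) :=
        ENNReal.ofReal_le_ofReal (min_one_le_rpow (by positivity) hs0 hs1)
    _ = ENNReal.ofReal (r ^ s) * ENNReal.ofReal (y ^ (-s)) := by
      rw [Real.div_rpow hr hy.le, Real.rpow_neg hy.le, div_eq_mul_inv,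
        ENNReal.ofReal_mul (by positivity)]

section Scheduling

variable {Ω ι : Type*} [MeasurableSpace Ω] [Fintype ι] {P : Measure Ω} {W : ι → Ω → ℝ × ℝ}
  {I : Ω → ι}

lemma measure_fst_lt_le (hW : iIndepFun W P) (hmW : ∀ i, Measurable (W i))
    (hlaw : ∀ i, P.map (W i) = ν₂)
    (hmax : ∀ᵐ ω ∂P, ∀ j, min (W j ω).1 (W j ω).2 ≤ min (W (I ω) ω).1 (W (I ω) ω).2) (t : ℝ) :
    P {ω | (W (I ω) ω).1 < t} ≤ (2 * ENNReal.ofReal t) ^ Fintype.card ι := by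
  have hsub : {ω | (W (I ω) ω).1 < t} ≤ᵐ[P] ⋂ j, W j ⁻¹' {p | min p.1 p.2 < t} := by
    filter_upwards [hmax] with ω hω hlt
    exact mem_iInter.2 fun j ↦ (hω j).trans_lt ((min_le_left _ _).trans_lt hlt)
  calc P {ω | (W (I ω) ω).1 < t}
      ≤ P (⋂ j, W j ⁻¹' {p | min p.1 p.2 < t}) := measure_mono_ae hsub
    _ = ∏ _j : ι, ν₂ {p : ℝ × ℝ | min p.1 p.2 < t} :=
      hW.measure_iInter_preimage_eq_prod hmW hlaw fun _ ↦
        measurableSet_lt (by fun_prop) (by fun_prop)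
    _ ≤ (2 * ENNReal.ofReal t) ^ Fintype.card ι := by
      rw [Finset.prod_const, Finset.card_univ]
      exact pow_le_pow_left' (expMeasure_prod_setOf_min_lt_le t) _

/-- Under the hyperbola the scheduled user's `min` is below `ε + √r`, hence so is every
user's. -/
lemma measure_hyperbola_le (hW : iIndepFun W P) (hmW : ∀ i, Measurable (W i))
    (hlaw : ∀ i, P.map (W i) = ν₂)
    (hmax : ∀ᵐ ω ∂P, ∀ j, min (W j ω).1 (W j ω).2 ≤ min (W (I ω) ω).1 (W (I ω) ω).2)
    {ε r : ℝ} (hε : 0 ≤ ε) (hr : 0 ≤ r) :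
    P {ω | ((W (I ω) ω).1 - ε) * (W (I ω) ω).2 < r ∧ ε < (W (I ω) ω).1}
      ≤ Fintype.card ι * (ν₂ {p : ℝ × ℝ | (p.1 - ε) * p.2 < r ∧ ε < p.1}
          * (2 * ENNReal.ofReal (ε + √r)) ^ (Fintype.card ι - 1)) := by
  classical
  set H := {p : ℝ × ℝ | (p.1 - ε) * p.2 < r ∧ ε < p.1}
  set D := {p : ℝ × ℝ | min p.1 p.2 < ε + √r}
  have hH : MeasurableSet H :=
    (measurableSet_lt (f := fun p : ℝ × ℝ ↦ (p.1 - ε) * p.2) (by fun_prop) measurable_const).inter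
      (measurableSet_lt measurable_const measurable_fst)
  have hsub : {ω | ((W (I ω) ω).1 - ε) * (W (I ω) ω).2 < r ∧ ε < (W (I ω) ω).1}
      ≤ᵐ[P] ⋃ i, ⋂ j, W j ⁻¹' if j = i then H else D := by
    filter_upwards [hmax] with ω hω hT
    refine mem_iUnion.2 ⟨I ω, mem_iInter.2 fun j ↦ ?_⟩
    split_ifs with hj
    · rw [hj]
      exact hT
    · exact (hω j).trans_lt (min_lt_add_sqrt_of_mul_lt hε hr hT.1)
  calc P {ω | ((W (I ω) ω).1 - ε) * (W (I ω) ω).2 < r ∧ ε < (W (I ω) ω).1}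
      ≤ ∑ i, P (⋂ j, W j ⁻¹' if j = i then H else D) :=
        (measure_mono_ae hsub).trans (measure_iUnion_fintype_le _ _)
    _ = ∑ _i : ι, ν₂ H * ν₂ D ^ (Fintype.card ι - 1) := Finset.sum_congr rfl fun i _ ↦
        hW.measure_iInter_preimage_ite hmW hlaw i hH (measurableSet_lt (by fun_prop) (by fun_prop))
    _ ≤ _ := by
      rw [Finset.sum_const, Finset.card_univ, nsmul_eq_mul]
      gcongr
      exact expMeasure_prod_setOf_min_lt_le _

/-- If user `i₀` has both gains in `(2a, 3a]` and every other user has its first gain in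
`(0, a]`, the scheduler must pick `i₀`, and its pair lies under the hyperbola. -/
lemma ofReal_pow_le_measure_hyperbola (hW : iIndepFun W P) (hmW : ∀ i, Measurable (W i))
    (hlaw : ∀ i, P.map (W i) = ν₂)
    (hmax : ∀ᵐ ω ∂P, ∀ j, min (W j ω).1 (W j ω).2 ≤ min (W (I ω) ω).1 (W (I ω) ω).2)
    (i₀ : ι) {ε r a : ℝ} (hε : 0 < ε) (hεa : ε < 2 * a) (ha : 3 * a ≤ 1) (har : 9 * a ^ 2 ≤ r) :
    ENNReal.ofReal (Real.exp (-1) * a) ^ (Fintype.card ι + 1)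
      ≤ P {ω | ((W (I ω) ω).1 - ε) * (W (I ω) ω).2 < r ∧ ε < (W (I ω) ω).1} := by
  classical
  have ha0 : 0 < a := by linarith
  set R₀ := Ioc (2 * a) (3 * a) ×ˢ Ioc (2 * a) (3 * a)
  set R₁ := Ioc 0 a ×ˢ (univ : Set ℝ)
  have hsub : (⋂ j, W j ⁻¹' if j = i₀ then R₀ else R₁)
      ≤ᵐ[P] {ω | ((W (I ω) ω).1 - ε) * (W (I ω) ω).2 < r ∧ ε < (W (I ω) ω).1} := by
    filter_upwards [hmax] with ω hω hbox
    have hmem := mem_iInter.1 hbox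
    have h₀ : W i₀ ω ∈ R₀ := by simpa using hmem i₀
    have hI : I ω = i₀ := by
      by_contra hne
      have h₁ : W (I ω) ω ∈ R₁ := by simpa [hne] using hmem (I ω)
      linarith [hω i₀, min_le_left (W (I ω) ω).1 (W (I ω) ω).2, h₁.1.2,
        lt_min h₀.1.1 h₀.2.1]
    obtain ⟨⟨hx₁, hx₂⟩, hy₁, hy₂⟩ := h₀
    show ((W (I ω) ω).1 - ε) * (W (I ω) ω).2 < r ∧ ε < (W (I ω) ω).1
    rw [hI]
    constructor
    · nlinarith
    · linarith
  have hIoc : ∀ b, 0 ≤ b → b + a ≤ 1 →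
      ENNReal.ofReal (Real.exp (-1) * a) ≤ expMeasure 1 (Ioc b (b + a)) := fun b hb hba ↦ by
    simpa using ofReal_exp_neg_one_mul_le_expMeasure_one_Ioc hb (by linarith) hba
  have hcard : 0 < Fintype.card ι := Fintype.card_pos_iff.2 ⟨i₀⟩
  calc ENNReal.ofReal (Real.exp (-1) * a) ^ (Fintype.card ι + 1)
      = ENNReal.ofReal (Real.exp (-1) * a) ^ 2
          * ENNReal.ofReal (Real.exp (-1) * a) ^ (Fintype.card ι - 1) := by
        rw [← pow_add]
        congr 1
        omega
    _ ≤ ν₂ R₀ * ν₂ R₁ ^ (Fintype.card ι - 1) := by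
        rw [Measure.prod_prod, Measure.prod_prod, measure_univ, mul_one, sq]
        have h₀ := hIoc (2 * a) (by linarith) (by linarith)
        rw [show 2 * a + a = 3 * a by ring] at h₀
        gcongr
        simpa using hIoc 0 le_rfl (by linarith)
    _ = P (⋂ j, W j ⁻¹' if j = i₀ then R₀ else R₁) :=
        (hW.measure_iInter_preimage_ite hmW hlaw i₀ (measurableSet_Ioc.prod measurableSet_Ioc)
          (measurableSet_Ioc.prod .univ)).symm
    _ ≤ _ := measure_mono_ae hsub

/-- `P_o(ε)` for the scheduled pair `W (I ω) ω = (X_I, Y_I)`, with `ε₁ = ε / η`. -/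
def outage (P : Measure Ω) (W : ι → Ω → ℝ × ℝ) (I : Ω → ι) (η ε : ℝ) : ℝ :=
  (P {ω | (W (I ω) ω).1 < ε}).toReal
    + (P {ω | ((W (I ω) ω).1 - ε) * (W (I ω) ω).2 < ε / η ∧ ε < (W (I ω) ω).1}).toReal

lemma rpow_le_outage (hW : iIndepFun W P) (hmW : ∀ i, Measurable (W i))
    (hlaw : ∀ i, P.map (W i) = ν₂)
    (hmax : ∀ᵐ ω ∂P, ∀ j, min (W j ω).1 (W j ω).2 ≤ min (W (I ω) ω).1 (W (I ω) ω).2)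
    (i₀ : ι) {η : ℝ} (hη : 0 < η) :
    ∃ c, 0 < c ∧ ∀ᶠ ε in 𝓝[>] 0,
      c * ε ^ (((Fintype.card ι : ℝ) + 1) / 2) ≤ outage P W I η ε := by
  have := hW.isProbabilityMeasure
  set n := Fintype.card ι
  refine ⟨(Real.exp (-1) / 3) ^ (n + 1) / η ^ (((n : ℝ) + 1) / 2), by positivity, ?_⟩
  filter_upwards [Ioo_mem_nhdsGT (show 0 < min η (4 / (9 * η)) by positivity)]
    with ε ⟨hε, hεlt⟩
  have hεη : ε ≤ η := (hεlt.trans_le (min_le_left _ _)).le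
  have hεη' : 9 * η * ε < 4 := by
    have := hεlt.trans_le (min_le_right _ _)
    rw [lt_div_iff₀ (by positivity)] at this
    linarith
  set δ := √(ε / η)
  have hδsq : δ ^ 2 = ε / η := Real.sq_sqrt (by positivity)
  have hδ1 : δ ≤ 1 := Real.sqrt_le_one.mpr ((div_le_one hη).2 hεη)
  have hεδ : ε < 2 * (δ / 3) := by
    have : 3 * ε / 2 < δ :=
      (Real.lt_sqrt (by positivity)).2 (by rw [lt_div_iff₀ hη]; nlinarith)
    linarith
  have hT := ofReal_pow_le_measure_hyperbola hW hmW hlaw hmax i₀ (r := ε / η) hε hεδ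
    (by linarith) (by rw [div_pow, hδsq]; linarith)
  rw [← ENNReal.ofReal_pow (by positivity)] at hT
  have hδpow : δ ^ (n + 1) = ε ^ (((n : ℝ) + 1) / 2) / η ^ (((n : ℝ) + 1) / 2) := by
    rw [sqrt_pow_eq_rpow (by positivity), Real.div_rpow hε.le hη.le]
    push_cast
    ring_nf
  calc (Real.exp (-1) / 3) ^ (n + 1) / η ^ (((n : ℝ) + 1) / 2) * ε ^ (((n : ℝ) + 1) / 2)
      = (Real.exp (-1) * (δ / 3)) ^ (n + 1) := by
        rw [mul_pow, div_pow δ, hδpow, div_pow]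
        field_simp
    _ ≤ (P {ω | ((W (I ω) ω).1 - ε) * (W (I ω) ω).2 < ε / η ∧ ε < (W (I ω) ω).1}).toReal :=
        (ENNReal.ofReal_le_iff_le_toReal (measure_ne_top _ _)).1 hT
    _ ≤ outage P W I η ε := le_add_of_nonneg_left ENNReal.toReal_nonneg

lemma toReal_measure_fst_lt_le (hW : iIndepFun W P) (hmW : ∀ i, Measurable (W i))
    (hlaw : ∀ i, P.map (W i) = ν₂)
    (hmax : ∀ᵐ ω ∂P, ∀ j, min (W j ω).1 (W j ω).2 ≤ min (W (I ω) ω).1 (W (I ω) ω).2)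
    {ε q : ℝ} (hε : 0 < ε) (hε1 : ε ≤ 1) (hq : q ≤ Fintype.card ι) :
    (P {ω | (W (I ω) ω).1 < ε}).toReal ≤ 2 ^ Fintype.card ι * ε ^ q := by
  have hA := measure_fst_lt_le hW hmW hlaw hmax ε
  rw [← ENNReal.ofReal_ofNat, ← ENNReal.ofReal_mul (by norm_num),
    ← ENNReal.ofReal_pow (by positivity)] at hA
  calc (P {ω | (W (I ω) ω).1 < ε}).toReal ≤ (2 * ε) ^ Fintype.card ι :=
        ENNReal.toReal_le_of_le_ofReal (by positivity) hA
    _ = 2 ^ Fintype.card ι * ε ^ (Fintype.card ι : ℝ) := by rw [mul_pow, Real.rpow_natCast]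
    _ ≤ 2 ^ Fintype.card ι * ε ^ q :=
        mul_le_mul_of_nonneg_left (Real.rpow_le_rpow_of_exponent_ge hε hε1 hq) (by positivity)

lemma toReal_measure_hyperbola_le (hW : iIndepFun W P) (hmW : ∀ i, Measurable (W i))
    (hlaw : ∀ i, P.map (W i) = ν₂)
    (hmax : ∀ᵐ ω ∂P, ∀ j, min (W j ω).1 (W j ω).2 ≤ min (W (I ω) ω).1 (W (I ω) ω).2)
    (hcard : 1 ≤ Fintype.card ι) {ε η θ : ℝ} (hε : 0 < ε) (hη : 0 < η) (hθ0 : 0 < θ)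
    (hθ1 : θ < 1) (hεη : ε ≤ √(ε / η)) :
    (P {ω | ((W (I ω) ω).1 - ε) * (W (I ω) ω).2 < ε / η ∧ ε < (W (I ω) ω).1}).toReal
      ≤ Fintype.card ι * (∫⁻ y, ENNReal.ofReal (y ^ (-(1 - θ))) ∂expMeasure 1).toReal
          * 4 ^ (Fintype.card ι - 1) / η ^ (((Fintype.card ι : ℝ) + 1) / 2 - θ)
          * ε ^ (((Fintype.card ι : ℝ) + 1) / 2 - θ) := by
  set n := Fintype.card ι
  set p := ((n : ℝ) + 1) / 2 - θ
  set δ := √(ε / η)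
  set G := (∫⁻ y, ENNReal.ofReal (y ^ (-(1 - θ))) ∂expMeasure 1).toReal
  have hG : ENNReal.ofReal G = ∫⁻ y, ENNReal.ofReal (y ^ (-(1 - θ))) ∂expMeasure 1 :=
    ENNReal.ofReal_toReal (lintegral_rpow_neg_expMeasure_one_lt_top (by linarith)).ne
  have hB := (measure_hyperbola_le hW hmW hlaw hmax hε.le (r := ε / η) (by positivity)).trans
    (mul_le_mul_right (mul_le_mul_left (expMeasure_prod_hyperbola_le (s := 1 - θ)
      (by positivity) (by linarith) (by linarith)) _) _)
  have hreal : (n : ℝ≥0∞) * (ENNReal.ofReal ((ε / η) ^ (1 - θ))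
        * (∫⁻ y, ENNReal.ofReal (y ^ (-(1 - θ))) ∂expMeasure 1)
        * (2 * ENNReal.ofReal (ε + δ)) ^ (n - 1))
      = ENNReal.ofReal (n * ((ε / η) ^ (1 - θ) * G * (2 * (ε + δ)) ^ (n - 1))) := by
    rw [← hG, ENNReal.ofReal_mul (by positivity), ENNReal.ofReal_natCast,
      ENNReal.ofReal_mul (by positivity), ENNReal.ofReal_mul (by positivity),
      ENNReal.ofReal_pow (by positivity), ENNReal.ofReal_mul (by norm_num), ENNReal.ofReal_ofNat]
  have hexp : (ε / η) ^ (1 - θ) * (ε / η) ^ (((n - 1 : ℕ) : ℝ) / 2) = ε ^ p / η ^ p := by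
    rw [← Real.rpow_add (by positivity), ← Real.div_rpow hε.le hη.le, Nat.cast_sub hcard]
    congr 1
    simp only [p]
    ring
  calc _ ≤ n * ((ε / η) ^ (1 - θ) * G * (2 * (ε + δ)) ^ (n - 1)) :=
        ENNReal.toReal_le_of_le_ofReal (by positivity) (hB.trans_eq hreal)
    _ ≤ n * ((ε / η) ^ (1 - θ) * G * (4 * δ) ^ (n - 1)) := by
        gcongr n * (_ * _ * ?_ ^ _)
        linarith
    _ = n * G * 4 ^ (n - 1) / η ^ p * ε ^ p := by
        rw [mul_pow, sqrt_pow_eq_rpow (by positivity), div_mul_eq_mul_div, mul_div_assoc, ← hexp]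
        ring

lemma outage_le_rpow (hW : iIndepFun W P) (hmW : ∀ i, Measurable (W i))
    (hlaw : ∀ i, P.map (W i) = ν₂)
    (hmax : ∀ᵐ ω ∂P, ∀ j, min (W j ω).1 (W j ω).2 ≤ min (W (I ω) ω).1 (W (I ω) ω).2)
    (hcard : 1 ≤ Fintype.card ι) {η : ℝ} (hη : 0 < η) {θ : ℝ} (hθ0 : 0 < θ) (hθ1 : θ < 1) :
    ∃ K, 0 < K ∧ ∀ᶠ ε in 𝓝[>] 0,
      outage P W I η ε ≤ K * ε ^ (((Fintype.card ι : ℝ) + 1) / 2 - θ) := by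
  have := hW.isProbabilityMeasure
  set n := Fintype.card ι
  set G := (∫⁻ y, ENNReal.ofReal (y ^ (-(1 - θ))) ∂expMeasure 1).toReal
  set p := ((n : ℝ) + 1) / 2 - θ
  refine ⟨2 ^ n + n * G * 4 ^ (n - 1) / η ^ p, by positivity, ?_⟩
  filter_upwards [Ioo_mem_nhdsGT (show 0 < min 1 (1 / η) by positivity)] with ε ⟨hε, hεlt⟩
  have hε1 : ε ≤ 1 := (hεlt.trans_le (min_le_left _ _)).le
  have hεη : ε ≤ √(ε / η) := by
    have := hεlt.trans_le (min_le_right _ _)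
    rw [lt_div_iff₀ hη] at this
    refine Real.le_sqrt_of_sq_le ?_
    rw [le_div_iff₀ hη]
    nlinarith
  have hpn : p ≤ n := by
    have : (1 : ℝ) ≤ n := by exact_mod_cast hcard
    simp only [p]
    linarith
  calc outage P W I η ε ≤ 2 ^ n * ε ^ p + n * G * 4 ^ (n - 1) / η ^ p * ε ^ p :=
        add_le_add (toReal_measure_fst_lt_le hW hmW hlaw hmax hε hε1 hpn)
          (toReal_measure_hyperbola_le hW hmW hlaw hmax hcard hε hη hθ0 hθ1 hεη)
    _ = (2 ^ n + n * G * 4 ^ (n - 1) / η ^ p) * ε ^ p := by ring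

end Scheduling

lemma tendsto_log_const_mul_rpow_div_log {C : ℝ} (hC : 0 < C) (q : ℝ) :
    Tendsto (fun ε ↦ Real.log (C * ε ^ q) / Real.log ε) (𝓝[>] 0) (𝓝 q) := by
  have h : Tendsto (fun ε ↦ Real.log C / Real.log ε + q) (𝓝[>] 0) (𝓝 q) := by
    simpa using (Real.tendsto_log_nhdsGT_zero.const_div_atBot (Real.log C)).add_const q
  refine h.congr' ?_
  filter_upwards [Ioo_mem_nhdsGT one_pos] with ε ⟨h0, h1⟩
  rw [Real.log_mul hC.ne' (Real.rpow_pos_of_pos h0 q).ne', Real.log_rpow h0, add_div,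
    mul_div_cancel_right₀ _ (Real.log_neg h0 h1).ne]

lemma tendsto_log_div_log_of_rpow_bounds {f : ℝ → ℝ} {L : ℝ}
    (hlow : ∃ c, 0 < c ∧ ∀ᶠ ε in 𝓝[>] 0, c * ε ^ L ≤ f ε)
    (hup : ∀ θ, 0 < θ → θ < 1 → ∃ K, 0 < K ∧ ∀ᶠ ε in 𝓝[>] 0, f ε ≤ K * ε ^ (L - θ)) :
    Tendsto (fun ε ↦ Real.log (f ε) / Real.log ε) (𝓝[>] 0) (𝓝 L) := by
  obtain ⟨c, hc, hcf⟩ := hlow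
  have hunit : ∀ᶠ ε in 𝓝[>] (0 : ℝ), ε ∈ Ioo 0 1 := Ioo_mem_nhdsGT one_pos
  refine tendsto_order.2 ⟨fun a ha ↦ ?_, fun a ha ↦ ?_⟩
  · set θ := min ((L - a) / 2) (1 / 2)
    have haθ : a < L - θ := by linarith [min_le_left ((L - a) / 2) (1 / 2)]
    obtain ⟨K, hK, hfK⟩ :=
      hup θ (lt_min (by linarith) one_half_pos) ((min_le_right _ _).trans_lt one_half_lt_one)
    filter_upwards [hunit, hcf, hfK,
      (tendsto_log_const_mul_rpow_div_log hK _).eventually (lt_mem_nhds haθ)]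
      with ε ⟨h0, h1⟩ hcε hKε haε
    have hf : 0 < f ε := (by positivity : 0 < c * ε ^ L).trans_le hcε
    exact haε.trans_le
      (div_le_div_of_nonpos_of_le (Real.log_neg h0 h1).le (Real.log_le_log hf hKε))
  · filter_upwards [hunit, hcf,
      (tendsto_log_const_mul_rpow_div_log hc L).eventually (gt_mem_nhds ha)]
      with ε ⟨h0, h1⟩ hcε haε
    exact (div_le_div_of_nonpos_of_le (Real.log_neg h0 h1).le
      (Real.log_le_log (by positivity) hcε)).trans_lt haε

end MaxMinScheduling

open MaxMinScheduling

theorem stmt1_general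
    {Ω : Type*} [MeasureSpace Ω] [IsProbabilityMeasure (ℙ : Measure Ω)]
    (M : ℕ) (hM : 1 ≤ M)
    (X Y : Fin M → Ω → ℝ)
    (hmX : ∀ i, Measurable (X i)) (hmY : ∀ i, Measurable (Y i))
    (hindep : iIndepFun (Sum.elim X Y) ℙ)
    (hX : ∀ i, Measure.map (X i) ℙ = expMeasure 1)
    (hY : ∀ i, Measure.map (Y i) ℙ = expMeasure 1)
    (I : Ω → Fin M)
    (hmax : ∀ᵐ ω ∂ℙ, ∀ j, min (X j ω) (Y j ω) ≤ min (X (I ω) ω) (Y (I ω) ω))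
    (η : ℝ) (hη : 0 < η) :
    Tendsto
      (fun ε : ℝ =>
        Real.log
            ((ℙ {ω | X (I ω) ω < ε}).toReal +
              (ℙ {ω | (X (I ω) ω - ε) * Y (I ω) ω < ε / η ∧ ε < X (I ω) ω}).toReal)
          / Real.log ε)
      (𝓝[>] 0) (𝓝 (((M : ℝ) + 1) / 2)) := by
  set W : Fin M → Ω → ℝ × ℝ := fun j ω ↦ (X j ω, Y j ω)
  have hmW : ∀ j, Measurable (W j) := fun j ↦ (hmX j).prodMk (hmY j)
  have hlaw : ∀ j, Measure.map (W j) ℙ = (expMeasure 1).prod (expMeasure 1) := fun j ↦ by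
    have hj : IndepFun (X j) (Y j) ℙ := hindep.indepFun Sum.inl_ne_inr
    have h := hj.map_prod_eq_prod_map_map (hmX j).aemeasurable (hmY j).aemeasurable
    rwa [hX j, hY j] at h
  have hW : iIndepFun W ℙ := hindep.prodMk_of_sumElim hmX hmY
  have hcard : 1 ≤ Fintype.card (Fin M) := by rwa [Fintype.card_fin]
  have h := tendsto_log_div_log_of_rpow_bounds (f := outage ℙ W I η)
    (rpow_le_outage hW hmW hlaw hmax ⟨0, hM⟩ hη)
    (fun θ hθ0 hθ1 ↦ outage_le_rpow hW hmW hlaw hmax hcard hη hθ0 hθ1)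
  rw [Fintype.card_fin] at h
  exact h

/-- **Diversity order of max-min scheduling with an energy-harvesting relay.**
`X₁,…,X_M, Y₁,…,Y_M` are `2M` independent rate-1 exponential random variables, `I` is the
(a.s. unique) index maximizing `min(Xᵢ, Yᵢ)`, `η > 0`, and for `ε > 0`, `ε₁ = ε/η` and
`P_o(ε) = P(X_I < ε) + P((X_I − ε)·Y_I < ε₁ ∧ X_I > ε)`. Then
`lim_{ε→0⁺} log P_o(ε) / log ε = (M+1)/2`. -/
theorem stmt1
    {Ω : Type*} [MeasureSpace Ω] [IsProbabilityMeasure (ℙ : Measure Ω)]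
    (M : ℕ) (hM : 1 ≤ M)
    (X Y : Fin M → Ω → ℝ)
    (hmX : ∀ i, Measurable (X i)) (hmY : ∀ i, Measurable (Y i))
    (hindep : iIndepFun (Sum.elim X Y) ℙ)
    (hX : ∀ i, Measure.map (X i) ℙ = expMeasure 1)
    (hY : ∀ i, Measure.map (Y i) ℙ = expMeasure 1)
    (I : Ω → Fin M) (hI : Measurable I)
    (hmax : ∀ᵐ ω ∂ℙ, ∀ j, min (X j ω) (Y j ω) ≤ min (X (I ω) ω) (Y (I ω) ω))
    (η : ℝ) (hη : 0 < η) :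
    Tendsto
      (fun ε : ℝ =>
        Real.log
            ((ℙ {ω | X (I ω) ω < ε}).toReal +
              (ℙ {ω | (X (I ω) ω - ε) * Y (I ω) ω < ε / η ∧ ε < X (I ω) ω}).toReal)
          / Real.log ε)
      (𝓝[>] 0) (𝓝 (((M : ℝ) + 1) / 2)) :=
  stmt1_general M hM X Y hmX hmY hindep hX hY I hmax η hη
end

section
/- Fix η > 0 and an integer M ≥ 1, and for ε > 0 set ε₁ = ε/η and P_o(ε) = (1 − e^{−ε})^M + Σ_{n=1}^{M} (1 − ∫₀^∞ e^{−y − ε₁/y} dy)^n · C(M,n) · (1 − e^{−ε})^{M−n} · e^{−nε}. Then lim_{ε→0⁺} log P_o(ε) / log ε = M; that is, the proposed user scheduling strategy achieves the full diversity gain M. -/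
/-!
Write `x = 1 - e^{-ε}` and `g = 1 - ∫₀^∞ e^{-y - ε₁/y} dy`. Since `g ≥ 0` and `e^{-nε} ≤ 1`,
`P_o(ε)` lies between `x^M ≥ (ε/2)^M` and, by the binomial theorem, `(x + g)^M`. The inequality
`1 - e^{-u} ≤ u^{1-t}` under the integral `g = ∫₀^∞ e^{-y} (1 - e^{-ε₁/y}) dy` gives
`g ≤ Γ(t) ε₁^{1-t}` for every `t ∈ (0, 1]`, so `P_o(ε) = O(ε^{(1-t)M})`. Hence
`log P_o(ε) / log ε` lies eventually between `(1-t)M - o(1)` and `M + o(1)`.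
-/

open Filter Topology MeasureTheory Set Real

theorem log_mul_rpow_div_log {c ε : ℝ} (s : ℝ) (hc : 0 < c) (hε : 0 < ε) (hlog : log ε ≠ 0) :
    log (c * ε ^ s) / log ε = s + log c / log ε := by
  rw [log_mul hc.ne' (rpow_pos_of_pos hε s).ne', log_rpow hε]
  field_simp
  ring

theorem tendsto_log_div_log_nhdsGT_zero {f : ℝ → ℝ} {d : ℝ}
    (hlow : ∃ a > 0, ∀ᶠ ε in 𝓝[>] 0, a * ε ^ d ≤ f ε)
    (hup : ∀ s < d, ∃ K > 0, ∀ᶠ ε in 𝓝[>] 0, f ε ≤ K * ε ^ s) :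
    Tendsto (fun ε => log (f ε) / log ε) (𝓝[>] 0) (𝓝 d) := by
  have hpos : ∀ᶠ ε : ℝ in 𝓝[>] 0, 0 < ε := self_mem_nhdsWithin
  have hlog_neg : ∀ᶠ ε in 𝓝[>] 0, log ε < 0 := tendsto_log_nhdsGT_zero.eventually_lt_atBot 0
  have hshift : ∀ c s, Tendsto (fun ε => s + log c / log ε) (𝓝[>] 0) (𝓝 s) := fun c s => by
    simpa using (tendsto_const_nhds.div_atBot tendsto_log_nhdsGT_zero).const_add s
  obtain ⟨a, ha, hfa⟩ := hlow
  refine tendsto_order.2 ⟨fun b hb => ?_, fun b hb => ?_⟩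
  · obtain ⟨s, hbs, hsd⟩ := exists_between hb
    obtain ⟨K, hK, hfK⟩ := hup s hsd
    filter_upwards [hpos, hlog_neg, hfa, hfK, (hshift K s).eventually (lt_mem_nhds hbs)]
      with ε hε hlog hεa hεK hb'
    have hf : 0 < f ε := (mul_pos ha (rpow_pos_of_pos hε d)).trans_le hεa
    calc b < s + log K / log ε := hb'
      _ = log (K * ε ^ s) / log ε := (log_mul_rpow_div_log s hK hε hlog.ne).symm
      _ ≤ log (f ε) / log ε := div_le_div_of_nonpos_of_le hlog.le (log_le_log hf hεK)
  · filter_upwards [hpos, hlog_neg, hfa, (hshift a d).eventually (gt_mem_nhds hb)]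
      with ε hε hlog hεa hb'
    calc log (f ε) / log ε ≤ log (a * ε ^ d) / log ε :=
          div_le_div_of_nonpos_of_le hlog.le (log_le_log (by positivity) hεa)
      _ = d + log a / log ε := log_mul_rpow_div_log d ha hε hlog.ne
      _ < b := hb'

theorem one_sub_exp_neg_le_rpow {x r : ℝ} (hx : 0 ≤ x) (hr0 : 0 ≤ r) (hr1 : r ≤ 1) :
    1 - exp (-x) ≤ x ^ r := by
  rcases le_total x 1 with hx1 | hx1
  · calc 1 - exp (-x) ≤ x := by linarith [one_sub_le_exp_neg x]
      _ = x ^ (1 : ℝ) := (rpow_one x).symm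
      _ ≤ x ^ r := rpow_le_rpow_of_exponent_ge' hx hx1 hr0 hr1
  · calc 1 - exp (-x) ≤ 1 := by linarith [exp_pos (-x)]
      _ ≤ x ^ r := one_le_rpow hx1 hr0

theorem half_le_one_sub_exp_neg {x : ℝ} (hx0 : 0 ≤ x) (hx1 : x ≤ 1) :
    x / 2 ≤ 1 - exp (-x) := by
  have h := add_one_le_exp x
  have hinv : exp (-x) * exp x = 1 := by rw [← exp_add, neg_add_cancel, exp_zero]
  nlinarith [exp_pos (-x)]

/-- The distribution function `P(XY ≤ c)` of the product of two independent rate-one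
exponential variables. -/
noncomputable def expProductCDF (c : ℝ) : ℝ :=
  1 - ∫ y in Ioi 0, exp (-y - c / y)

theorem integrableOn_exp_neg_sub_div {c : ℝ} (hc : 0 ≤ c) :
    IntegrableOn (fun y : ℝ => exp (-y - c / y)) (Ioi 0) := by
  refine (integrableOn_exp_neg_Ioi 0).mono' ?_ ?_
  · exact ((continuousOn_id.neg.sub (continuousOn_const.div continuousOn_id
      fun y hy => (ne_of_gt hy))).rexp).aestronglyMeasurable measurableSet_Ioi
  · filter_upwards [ae_restrict_mem measurableSet_Ioi] with y (hy : 0 < y)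
    rw [norm_of_nonneg (exp_pos _).le, exp_le_exp]
    linarith [div_nonneg hc hy.le]

theorem expProductCDF_eq_integral {c : ℝ} (hc : 0 ≤ c) :
    expProductCDF c = ∫ y in Ioi 0, (exp (-y) - exp (-y - c / y)) := by
  rw [integral_sub (integrableOn_exp_neg_Ioi 0) (integrableOn_exp_neg_sub_div hc),
    integral_exp_neg_Ioi_zero, expProductCDF]

theorem expProductCDF_nonneg {c : ℝ} (hc : 0 ≤ c) : 0 ≤ expProductCDF c := by
  rw [expProductCDF_eq_integral hc]
  refine setIntegral_nonneg measurableSet_Ioi fun y (hy : 0 < y) => ?_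
  rw [sub_nonneg, exp_le_exp]
  linarith [div_nonneg hc hy.le]

theorem expProductCDF_le_Gamma_mul_rpow {c t : ℝ} (hc : 0 ≤ c) (ht0 : 0 < t) (ht1 : t ≤ 1) :
    expProductCDF c ≤ Gamma t * c ^ (1 - t) := by
  rw [expProductCDF_eq_integral hc, Gamma_eq_integral ht0, ← integral_mul_const]
  refine setIntegral_mono_on ((integrableOn_exp_neg_Ioi 0).sub (integrableOn_exp_neg_sub_div hc))
    ((GammaIntegral_convergent ht0).mul_const _) measurableSet_Ioi fun y (hy : 0 < y) => ?_
  calc exp (-y) - exp (-y - c / y) = exp (-y) * (1 - exp (-(c / y))) := by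
        rw [mul_sub, mul_one, ← exp_add, ← sub_eq_add_neg]
    _ ≤ exp (-y) * (c / y) ^ (1 - t) :=
        mul_le_mul_of_nonneg_left
          (one_sub_exp_neg_le_rpow (div_nonneg hc hy.le) (by linarith) (by linarith))
          (exp_pos _).le
    _ = exp (-y) * y ^ (t - 1) * c ^ (1 - t) := by
        rw [div_rpow hc hy.le, div_eq_mul_inv, ← rpow_neg hy.le, neg_sub]
        ring

noncomputable def outageProb (η : ℝ) (M : ℕ) (ε : ℝ) : ℝ :=
  (1 - exp (-ε)) ^ M + ∑ n ∈ Finset.Icc 1 M,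
    expProductCDF (ε / η) ^ n * (M.choose n : ℝ) * (1 - exp (-ε)) ^ (M - n) * exp (-(n : ℝ) * ε)

section outageProb

variable {η ε : ℝ} {M : ℕ}

theorem pow_one_sub_exp_neg_le_outageProb (hη : 0 ≤ η) (hε : 0 ≤ ε) :
    (1 - exp (-ε)) ^ M ≤ outageProb η M ε := by
  have hx : 0 ≤ 1 - exp (-ε) := sub_nonneg.2 (exp_le_one_iff.2 (neg_nonpos.2 hε))
  have hg := expProductCDF_nonneg (div_nonneg hε hη)
  exact le_add_of_nonneg_right (Finset.sum_nonneg fun n _ => by positivity)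

-- Dropping the factors `e^{-nε} ≤ 1` leaves the binomial expansion of `(g + (1 - e^{-ε}))^M`.
theorem outageProb_le_pow (hη : 0 ≤ η) (hε : 0 ≤ ε) :
    outageProb η M ε ≤ (expProductCDF (ε / η) + (1 - exp (-ε))) ^ M := by
  have hx : 0 ≤ 1 - exp (-ε) := sub_nonneg.2 (exp_le_one_iff.2 (neg_nonpos.2 hε))
  have hg := expProductCDF_nonneg (div_nonneg hε hη)
  rw [add_pow, Finset.range_eq_Ico, Finset.sum_eq_sum_Ico_succ_bot (Nat.zero_lt_succ M), zero_add,
    Nat.succ_eq_add_one, Finset.Ico_add_one_right_eq_Icc, outageProb]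
  simp only [pow_zero, one_mul, Nat.sub_zero, Nat.choose_zero_right, Nat.cast_one, mul_one]
  refine add_le_add le_rfl (Finset.sum_le_sum fun n _ => ?_)
  have hexp : exp (-(n : ℝ) * ε) ≤ 1 := exp_le_one_iff.2 (by nlinarith)
  calc _ ≤ expProductCDF (ε / η) ^ n * (M.choose n : ℝ) * (1 - exp (-ε)) ^ (M - n) * 1 := by
        gcongr
    _ = _ := by ring

theorem half_pow_mul_rpow_le_outageProb (hη : 0 ≤ η) (hε0 : 0 ≤ ε) (hε1 : ε ≤ 1) :
    (1 / 2) ^ M * ε ^ (M : ℝ) ≤ outageProb η M ε :=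
  calc (1 / 2) ^ M * ε ^ (M : ℝ) = (ε / 2) ^ M := by rw [rpow_natCast, ← mul_pow, one_div_mul_eq_div]
    _ ≤ (1 - exp (-ε)) ^ M := by gcongr; exact half_le_one_sub_exp_neg hε0 hε1
    _ ≤ outageProb η M ε := pow_one_sub_exp_neg_le_outageProb hη hε0

theorem outageProb_le_mul_rpow (hη : 0 < η) (hε : 0 < ε) {t : ℝ} (ht0 : 0 < t) (ht1 : t ≤ 1) :
    outageProb η M ε ≤ (Gamma t / η ^ (1 - t) + 1) ^ M * ε ^ ((1 - t) * M) := by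
  have hg : expProductCDF (ε / η) ≤ Gamma t / η ^ (1 - t) * ε ^ (1 - t) :=
    calc expProductCDF (ε / η) ≤ Gamma t * (ε / η) ^ (1 - t) :=
          expProductCDF_le_Gamma_mul_rpow (div_nonneg hε.le hη.le) ht0 ht1
      _ = Gamma t / η ^ (1 - t) * ε ^ (1 - t) := by rw [div_rpow hε.le hη.le]; ring
  have hx : 1 - exp (-ε) ≤ ε ^ (1 - t) := one_sub_exp_neg_le_rpow hε.le (by linarith) (by linarith)
  have hg0 := expProductCDF_nonneg (div_nonneg hε.le hη.le)
  have hx0 : 0 ≤ 1 - exp (-ε) := sub_nonneg.2 (exp_le_one_iff.2 (neg_nonpos.2 hε.le))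
  calc outageProb η M ε ≤ (expProductCDF (ε / η) + (1 - exp (-ε))) ^ M :=
        outageProb_le_pow hη.le hε.le
    _ ≤ (Gamma t / η ^ (1 - t) * ε ^ (1 - t) + ε ^ (1 - t)) ^ M := by gcongr
    _ = (Gamma t / η ^ (1 - t) + 1) ^ M * ε ^ ((1 - t) * M) := by
        rw [rpow_mul_natCast hε.le, ← mul_pow, add_mul, one_mul]

theorem exists_outageProb_le_mul_rpow (hη : 0 < η) {s : ℝ} (hs : s < M) :
    ∃ K > 0, ∀ᶠ ε in 𝓝[>] 0, outageProb η M ε ≤ K * ε ^ s := by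
  set t := min 1 ((M - s) / (M + 1))
  have ht0 : 0 < t := lt_min one_pos (div_pos (sub_pos.2 hs) (by positivity))
  have ht1 : t ≤ 1 := min_le_left _ _
  have hts : s ≤ (1 - t) * M := by
    have : t * (M + 1) ≤ M - s := (le_div_iff₀ (by positivity)).1 (min_le_right _ _)
    nlinarith
  set K := (Gamma t / η ^ (1 - t) + 1) ^ M
  have hK : 0 < K := by have := Gamma_pos_of_pos ht0; positivity
  refine ⟨K, hK, ?_⟩
  filter_upwards [Ioc_mem_nhdsGT one_pos] with ε ⟨hε0, hε1⟩
  calc outageProb η M ε ≤ K * ε ^ ((1 - t) * M) := outageProb_le_mul_rpow hη hε0 ht0 ht1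
    _ ≤ K * ε ^ s := mul_le_mul_of_nonneg_left (rpow_le_rpow_of_exponent_ge hε0 hε1 hts) hK.le

end outageProb

theorem stmt4_general (η : ℝ) (hη : 0 < η) (M : ℕ) :
    Tendsto
      (fun ε : ℝ =>
        Real.log
            ((1 - Real.exp (-ε)) ^ M +
              ∑ n ∈ Finset.Icc 1 M,
                (1 - ∫ y in Set.Ioi (0 : ℝ), Real.exp (-y - (ε / η) / y)) ^ n *
                  (M.choose n : ℝ) * (1 - Real.exp (-ε)) ^ (M - n) * Real.exp (-(n : ℝ) * ε))
          / Real.log ε)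
      (𝓝[>] 0) (𝓝 M) := by
  refine tendsto_log_div_log_nhdsGT_zero (f := outageProb η M) ⟨(1 / 2) ^ M, by positivity, ?_⟩
    fun s hs => exists_outageProb_le_mul_rpow hη hs
  filter_upwards [Ioc_mem_nhdsGT one_pos] with ε ⟨hε0, hε1⟩
  exact half_pow_mul_rpow_le_outageProb hη.le hε0.le hε1

/-- Fix `η > 0` and `M ≥ 1`. With `ε₁ = ε/η` and
`P_o(ε) = (1 − e^{−ε})^M + Σ_{n=1}^{M} (1 − ∫₀^∞ e^{−y − ε₁/y} dy)^n C(M,n) (1 − e^{−ε})^{M−n} e^{−nε}`,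
we have `lim_{ε→0⁺} log P_o(ε)/log ε = M`: the proposed user scheduling strategy achieves the
full diversity gain `M`. -/
theorem stmt4 (η : ℝ) (hη : 0 < η) (M : ℕ) (hM : 1 ≤ M) :
    Tendsto
      (fun ε : ℝ =>
        Real.log
            ((1 - Real.exp (-ε)) ^ M +
              ∑ n ∈ Finset.Icc 1 M,
                (1 - ∫ y in Set.Ioi (0 : ℝ), Real.exp (-y - (ε / η) / y)) ^ n *
                  (M.choose n : ℝ) * (1 - Real.exp (-ε)) ^ (M - n) * Real.exp (-(n : ℝ) * ε))
          / Real.log ε)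
      (𝓝[>] 0) (𝓝 M) :=
  stmt4_general η hη M
end

section
/- For every integer M ≥ 1 and every ε > 0, ∫₀^ε (1 − e^{z−ε}) · 2M · e^{−2z} · (1 − e^{−2z})^{M−1} dz = e^{−ε} · Σ_{i=0}^{M} C(M,i) · ((−1)^i/(2i−1)) · (1 − e^{−(2i−1)ε}). -/
/-!
Write `F z = (1 - e^{-2z})^M`, so that the density is `F'`. Integrating by parts, the boundary
terms vanish (`1 - e^{z-ε}` at `z = ε`, `F` at `z = 0` since `M ≥ 1`), leaving
`e^{-ε} ∫₀^ε e^z F z dz`. Expanding `e^z F z = Σ C(M,i) (-1)^i e^{(1-2i)z}` by the binomial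
theorem, each term integrates in closed form since `1 - 2i ≠ 0`.
-/

open Real Finset intervalIntegral

lemma integral_exp_mul {c : ℝ} (hc : c ≠ 0) (a b : ℝ) :
    ∫ x in a..b, exp (c * x) = (exp (c * b) - exp (c * a)) / c := by
  rw [integral_comp_mul_left (fun x => exp x) hc, integral_exp, smul_eq_mul, inv_mul_eq_div]

lemma hasDerivAt_one_sub_exp_neg_two_mul_pow (M : ℕ) (z : ℝ) :
    HasDerivAt (fun z => (1 - exp (-2 * z)) ^ M)
      (2 * M * exp (-2 * z) * (1 - exp (-2 * z)) ^ (M - 1)) z :=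
  ((((hasDerivAt_id' z).const_mul (-2)).exp.const_sub 1).fun_pow M).congr_deriv (by ring)

lemma exp_mul_one_sub_exp_neg_two_mul_pow (M : ℕ) (z : ℝ) :
    exp z * (1 - exp (-2 * z)) ^ M
      = ∑ i ∈ range (M + 1), (M.choose i : ℝ) * (-1) ^ i * exp ((1 - 2 * i) * z) := by
  rw [sub_eq_neg_add, add_pow, mul_sum]
  refine sum_congr rfl fun i _ => ?_
  rw [neg_pow, ← exp_nat_mul, one_pow, mul_one,
    show (1 - 2 * (i : ℝ)) * z = z + i * (-2 * z) by ring, exp_add]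
  ring

lemma integral_mul_deriv_one_sub_exp_neg_two_mul_pow {M : ℕ} (hM : M ≠ 0) (ε : ℝ) :
    ∫ z in (0 : ℝ)..ε,
        (1 - exp (z - ε)) * (2 * (M : ℝ) * exp (-2 * z) * (1 - exp (-2 * z)) ^ (M - 1))
      = exp (-ε) * ∫ z in (0 : ℝ)..ε, exp z * (1 - exp (-2 * z)) ^ M := by
  have hu (z : ℝ) : HasDerivAt (fun z => 1 - exp (z - ε)) (-exp (z - ε)) z := by
    simpa using ((hasDerivAt_id' z).sub_const ε).exp.const_sub 1
  rw [integral_mul_deriv_eq_deriv_mul (fun z _ => hu z)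
    (fun z _ => hasDerivAt_one_sub_exp_neg_two_mul_pow M z)
    ((by fun_prop : Continuous _).intervalIntegrable _ _)
    ((by fun_prop : Continuous _).intervalIntegrable _ _), ← integral_const_mul]
  simp only [sub_self, exp_zero, mul_zero, zero_pow hM, zero_mul, zero_sub, ← integral_neg]
  congr 1 with z
  rw [exp_sub, exp_neg]
  ring

lemma two_mul_natCast_sub_one_ne_zero (i : ℕ) : 2 * (i : ℝ) - 1 ≠ 0 :=
  sub_ne_zero.mpr (by exact_mod_cast (by omega : 2 * i ≠ 1))

lemma integral_exp_mul_one_sub_exp_neg_two_mul_pow (M : ℕ) (ε : ℝ) :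
    ∫ z in (0 : ℝ)..ε, exp z * (1 - exp (-2 * z)) ^ M
      = ∑ i ∈ range (M + 1), (M.choose i : ℝ) * ((-1) ^ i / (2 * (i : ℝ) - 1)) *
          (1 - exp (-(2 * (i : ℝ) - 1) * ε)) := by
  simp only [exp_mul_one_sub_exp_neg_two_mul_pow]
  rw [integral_finsetSum fun i _ => (by fun_prop : Continuous _).intervalIntegrable _ _]
  refine sum_congr rfl fun i _ => ?_
  have hi := two_mul_natCast_sub_one_ne_zero i
  have hi' : 1 - 2 * (i : ℝ) ≠ 0 := by contrapose! hi; linarith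
  rw [integral_const_mul, integral_exp_mul hi', mul_zero, exp_zero]
  field_simp
  ring_nf

theorem stmt6_general (M : ℕ) (hM : 1 ≤ M) (ε : ℝ) :
    ∫ z in (0 : ℝ)..ε,
        (1 - Real.exp (z - ε)) *
          (2 * (M : ℝ) * Real.exp (-2 * z) * (1 - Real.exp (-2 * z)) ^ (M - 1))
      = Real.exp (-ε) *
          ∑ i ∈ Finset.range (M + 1),
            (M.choose i : ℝ) * ((-1) ^ i / (2 * (i : ℝ) - 1)) *
              (1 - Real.exp (-(2 * (i : ℝ) - 1) * ε)) := by
  rw [integral_mul_deriv_one_sub_exp_neg_two_mul_pow (by omega),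
    integral_exp_mul_one_sub_exp_neg_two_mul_pow]

/-- For every integer `M ≥ 1` and every `ε > 0`,
`∫₀^ε (1 − e^{z−ε}) · 2M e^{−2z} (1 − e^{−2z})^{M−1} dz
  = e^{−ε} Σ_{i=0}^{M} C(M,i) ((−1)^i/(2i−1)) (1 − e^{−(2i−1)ε})`. -/
theorem stmt6 (M : ℕ) (hM : 1 ≤ M) (ε : ℝ) (hε : 0 < ε) :
    ∫ z in (0 : ℝ)..ε,
        (1 - Real.exp (z - ε)) *
          (2 * (M : ℝ) * Real.exp (-2 * z) * (1 - Real.exp (-2 * z)) ^ (M - 1))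
      = Real.exp (-ε) *
          ∑ i ∈ Finset.range (M + 1),
            (M.choose i : ℝ) * ((-1) ^ i / (2 * (i : ℝ) - 1)) *
              (1 - Real.exp (-(2 * (i : ℝ) - 1) * ε)) :=
  stmt6_general M hM ε
end

section
/- For every integer M ≥ 1, lim_{ε→0⁺} ε^{−M} · Σ_{i=0}^{M−1} C(M−1,i) · (−1)^i · (1 − e^{−(2i+1)ε})/(2i+1) = 2^{M−1}/M. -/
/-!
Writing `M = n + 1`, the sum `Q(ε)` vanishes at `0` and, by the binomial theorem, has derivative
`e^{-ε} (1 - e^{-2ε})^n`; that is, `Q(ε) = ∫₀^ε e^{-t} (1 - e^{-2t})^n dt`. Since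
`1 - e^{-2ε} ~ 2ε`, L'Hôpital's rule gives `Q(ε) / ε^{n+1} → 2^n / (n + 1)`.
-/

open Filter Topology Finset Real

/-- The sum `Q̃₂₁` of the paper without its factor `e^{-ε}`, for `M = n + 1`. -/
noncomputable def maxMinSum (n : ℕ) (ε : ℝ) : ℝ :=
  ∑ i ∈ range (n + 1), (n.choose i : ℝ) * (-1) ^ i *
    ((1 - exp (-(2 * (i : ℝ) + 1) * ε)) / (2 * (i : ℝ) + 1))

lemma sum_choose_mul_neg_one_pow_mul_exp (n : ℕ) (t : ℝ) :
    ∑ i ∈ range (n + 1), (n.choose i : ℝ) * (-1) ^ i * exp (-(2 * (i : ℝ) + 1) * t) =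
      exp (-t) * (1 - exp (-2 * t)) ^ n := by
  rw [sub_eq_neg_add, add_pow, mul_sum]
  refine sum_congr rfl fun i _ => ?_
  have : exp (-(2 * (i : ℝ) + 1) * t) = exp (-t) * exp (-2 * t) ^ i := by
    rw [← exp_nat_mul, ← exp_add]
    ring_nf
  rw [this, neg_pow, one_pow]
  ring

lemma hasDerivAt_maxMinSum (n : ℕ) (t : ℝ) :
    HasDerivAt (maxMinSum n) (exp (-t) * (1 - exp (-2 * t)) ^ n) t := by
  rw [← sum_choose_mul_neg_one_pow_mul_exp]
  refine HasDerivAt.fun_sum fun i _ => ?_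
  have hc : (2 * (i : ℝ) + 1) ≠ 0 := by positivity
  have hexp := ((hasDerivAt_id' t).const_mul (-(2 * (i : ℝ) + 1))).exp
  refine (((hexp.const_sub 1).div_const (2 * (i : ℝ) + 1)).const_mul
    ((n.choose i : ℝ) * (-1) ^ i)).congr_deriv ?_
  rw [mul_one, mul_neg, neg_neg, mul_div_cancel_right₀ _ hc]

lemma maxMinSum_zero (n : ℕ) : maxMinSum n 0 = 0 := by
  simp [maxMinSum]

lemma continuous_maxMinSum (n : ℕ) : Continuous (maxMinSum n) := by
  unfold maxMinSum
  fun_prop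

lemma tendsto_one_sub_exp_neg_mul_div (c : ℝ) :
    Tendsto (fun x => (1 - exp (-c * x)) / x) (𝓝[≠] 0) (𝓝 c) := by
  have hderiv : HasDerivAt (fun x => 1 - exp (-c * x)) c 0 := by
    refine ((((hasDerivAt_id' (0 : ℝ)).const_mul (-c)).exp).const_sub 1).congr_deriv ?_
    simp
  convert hderiv.tendsto_slope_zero using 2 with x
  simp [div_eq_inv_mul]

lemma tendsto_deriv_maxMinSum_div (n : ℕ) :
    Tendsto (fun ε => exp (-ε) * (1 - exp (-2 * ε)) ^ n / ((n + 1 : ℝ) * ε ^ n))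
      (𝓝[>] 0) (𝓝 (2 ^ n / (n + 1))) := by
  have hexp : Tendsto (fun ε : ℝ => exp (-ε)) (𝓝[>] 0) (𝓝 1) :=
    tendsto_nhdsWithin_of_tendsto_nhds
      ((continuous_exp.comp continuous_neg).tendsto' 0 1 (by simp))
  have hslope := (tendsto_one_sub_exp_neg_mul_div 2).mono_left (nhdsGT_le_nhdsNE 0)
  convert ((hexp.mul (hslope.pow n)).div_const (n + 1 : ℝ)) using 2 with ε
  · rw [div_pow, mul_div_assoc, mul_div_assoc, div_div, mul_comm (ε ^ n)]
  · rw [one_mul]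

lemma tendsto_maxMinSum_div_pow (n : ℕ) :
    Tendsto (fun ε => maxMinSum n ε / ε ^ (n + 1)) (𝓝[>] 0) (𝓝 (2 ^ n / (n + 1))) := by
  have hsum : Tendsto (maxMinSum n) (𝓝[>] 0) (𝓝 0) := by
    simpa [maxMinSum_zero] using (continuous_maxMinSum n).continuousWithinAt.tendsto (x := 0)
  have hpow : Tendsto (fun ε : ℝ => ε ^ (n + 1)) (𝓝[>] 0) (𝓝 0) := by
    simpa using (continuous_pow (n + 1)).continuousWithinAt.tendsto (x := (0 : ℝ))
  refine HasDerivAt.lhopital_zero_nhdsGT (.of_forall (hasDerivAt_maxMinSum n))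
    (.of_forall fun ε => ?_) ?_ hsum hpow (tendsto_deriv_maxMinSum_div n)
  · simpa using hasDerivAt_pow (n + 1) ε
  · filter_upwards [self_mem_nhdsWithin] with ε (hε : 0 < ε)
    positivity

/-- For every integer `M ≥ 1`,
`lim_{ε→0⁺} ε^{−M} Σ_{i=0}^{M−1} C(M−1,i) (−1)^i (1 − e^{−(2i+1)ε})/(2i+1) = 2^{M−1}/M`. -/
theorem stmt9 (M : ℕ) (hM : 1 ≤ M) :
    Tendsto
      (fun ε : ℝ =>
        ε ^ (-(M : ℤ)) *
          ∑ i ∈ Finset.range M,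
            ((M - 1).choose i : ℝ) * (-1) ^ i *
              ((1 - Real.exp (-(2 * (i : ℝ) + 1) * ε)) / (2 * (i : ℝ) + 1)))
      (𝓝[>] 0) (𝓝 (2 ^ (M - 1) / M)) := by
  obtain ⟨n, rfl⟩ := Nat.exists_eq_add_of_le' hM
  convert tendsto_maxMinSum_div_pow n using 2 with ε
  · rw [maxMinSum, Nat.add_sub_cancel, zpow_neg, zpow_natCast, div_eq_inv_mul]
  · simp
end

section
/- Fix an integer M ≥ 2. For ε > 0 set ε₀(ε) = (ε + √(ε² + 4ε))/2, and define Q₂(ε) = 2M · Σ_{i=0}^{M−1} C(M−1,i) · (−1)^i · [ (e^{−ε} − e^{−(2i+2)ε})/(2i+1) + (e^{−(2i+2)ε} − e^{−(2i+2)ε₀(ε)})/(2i+2) − e^{−ε} · ∫₀^{ε₀(ε)} e^{−(2i+1)y − ε/y} dy ]. Then lim_{ε→0⁺} log Q₂(ε) / log ε = (M+1)/2. -/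
/-!
Each bracket equals `∫₀^{ε₀} e^{-(2i+1)y} (e^{-max(y,ε)} - e^{-ε-ε/y}) dy`, so by the binomial
theorem `Q₂(ε) = 2M ∫₀^{ε₀} e^{-y} (1 - e^{-2y})^{M-1} (e^{-max(y,ε)} - e^{-ε-ε/y}) dy`.
The integrand is nonnegative on `[0, ε₀]` because `y² ≤ εy + ε` there, it is at most
`2^M ε y^{M-2}`, and on `[ε₀/4, ε₀/2]` it is at least a constant multiple of `ε₀^M`.
As `√ε ≤ ε₀ ≤ 2√ε`, `Q₂(ε)` lies between two constant multiples of `ε^{(M+1)/2}`.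
-/

open Real Set Filter Topology MeasureTheory

noncomputable section

def eps0 (ε : ℝ) : ℝ := (ε + √(ε ^ 2 + 4 * ε)) / 2

def q2Integrand (n : ℕ) (ε y : ℝ) : ℝ :=
  exp (-y) * (1 - exp (-2 * y)) ^ n * (exp (-max y ε) - exp (-(ε + ε / y)))

end

section eps0

variable {ε : ℝ}

lemma eps0_sq (hε : 0 ≤ ε) : eps0 ε ^ 2 = ε * eps0 ε + ε := by
  have h := sq_sqrt (show 0 ≤ ε ^ 2 + 4 * ε by positivity)
  unfold eps0
  linear_combination h / 4

lemma le_eps0 (hε : 0 ≤ ε) : ε ≤ eps0 ε := by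
  have : ε ≤ √(ε ^ 2 + 4 * ε) := Real.le_sqrt_of_sq_le (by linarith)
  unfold eps0
  linarith

lemma sqrt_le_eps0 (hε : 0 ≤ ε) : √ε ≤ eps0 ε := by
  have : 2 * √ε ≤ √(ε ^ 2 + 4 * ε) :=
    Real.le_sqrt_of_sq_le (by nlinarith [sq_sqrt hε])
  unfold eps0
  linarith

lemma eps0_le_two_mul_sqrt (hε : 0 ≤ ε) (hε1 : ε ≤ 1) : eps0 ε ≤ 2 * √ε := by
  have h3 : √(ε ^ 2 + 4 * ε) ≤ 3 * √ε :=
    Real.sqrt_le_iff.mpr ⟨by positivity, by nlinarith [sq_sqrt hε]⟩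
  have h1 : ε ≤ √ε := by nlinarith [sq_sqrt hε, sqrt_nonneg ε, sqrt_le_one.mpr hε1]
  unfold eps0
  linarith

lemma eps0_le_add_div (hε : 0 ≤ ε) {y : ℝ} (hy : 0 < y) (hyε : y ≤ eps0 ε) :
    eps0 ε ≤ ε + ε / y := by
  have hE : 0 < eps0 ε := hy.trans_le hyε
  have hdiv : eps0 ε - ε = ε / eps0 ε := by
    rw [eq_div_iff hE.ne']
    linear_combination eps0_sq hε
  have : ε / eps0 ε ≤ ε / y := div_le_div_of_nonneg_left hε hy hyε
  linarith

lemma max_le_add_div (hε : 0 ≤ ε) {y : ℝ} (hy : 0 ≤ y) (hyε : y ≤ eps0 ε) :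
    max y ε ≤ ε + ε / y := by
  have hεy : ε ≤ ε + ε / y := le_add_of_nonneg_right (div_nonneg hε hy)
  rcases hy.eq_or_lt with rfl | hy
  · simpa using hε
  · exact max_le (hyε.trans (eps0_le_add_div hε hy hyε)) hεy

end eps0

lemma integral_exp_neg_mul {c : ℝ} (hc : c ≠ 0) (a b : ℝ) :
    ∫ x in a..b, exp (-c * x) = (exp (-c * a) - exp (-c * b)) / c := by
  rw [intervalIntegral.integral_comp_mul_left (fun x => exp x) (neg_ne_zero.mpr hc), integral_exp,
    smul_eq_mul]
  field_simp
  ring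

lemma integral_exp_neg_mul_exp_neg_max {c ε E : ℝ} (hc : 0 < c) (hε : 0 ≤ ε) (hεE : ε ≤ E) :
    ∫ y in 0..E, exp (-c * y) * exp (-max y ε)
      = (exp (-ε) - exp (-(c + 1) * ε)) / c
        + (exp (-(c + 1) * ε) - exp (-(c + 1) * E)) / (c + 1) := by
  have hcont : Continuous fun y => exp (-c * y) * exp (-max y ε) := by fun_prop
  have below :
      ∫ y in 0..ε, exp (-c * y) * exp (-max y ε) = ∫ y in 0..ε, exp (-ε) * exp (-c * y) := by
    refine intervalIntegral.integral_congr fun y hy => ?_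
    rw [uIcc_of_le hε] at hy
    simp only [max_eq_right hy.2, mul_comm]
  have above :
      ∫ y in ε..E, exp (-c * y) * exp (-max y ε) = ∫ y in ε..E, exp (-(c + 1) * y) := by
    refine intervalIntegral.integral_congr fun y hy => ?_
    rw [uIcc_of_le hεE] at hy
    simp only [max_eq_left hy.1, ← exp_add]
    ring_nf
  rw [← intervalIntegral.integral_add_adjacent_intervals (hcont.intervalIntegrable 0 ε)
    (hcont.intervalIntegrable ε E), below, above, intervalIntegral.integral_const_mul,
    integral_exp_neg_mul hc.ne', integral_exp_neg_mul (by positivity)]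
  rw [show -(c + 1) * ε = -ε + -c * ε by ring, exp_add, mul_zero, exp_zero]
  ring

lemma intervalIntegrable_exp_neg_add_div {ε a b : ℝ} (hε : 0 ≤ ε) (ha : 0 ≤ a) (hb : 0 ≤ b) :
    IntervalIntegrable (fun y => exp (-(ε + ε / y))) volume a b := by
  refine (intervalIntegrable_const (c := (1 : ℝ))).mono_fun (by fun_prop) ?_
  refine (ae_restrict_iff' measurableSet_uIoc).mpr (Eventually.of_forall fun y hy => ?_)
  have hy : 0 < y := (le_min ha hb).trans_lt hy.1
  simp only [norm_eq_abs, abs_exp, abs_one, exp_le_one_iff, neg_nonpos]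
  positivity

lemma intervalIntegrable_exp_neg_max_sub {ε a b : ℝ} (hε : 0 ≤ ε) (ha : 0 ≤ a) (hb : 0 ≤ b) :
    IntervalIntegrable (fun y => exp (-max y ε) - exp (-(ε + ε / y))) volume a b :=
  (Continuous.intervalIntegrable (by fun_prop) a b).sub
    (intervalIntegrable_exp_neg_add_div hε ha hb)

lemma bracket_eq_integral {c ε E : ℝ} (hc : 0 < c) (hε : 0 ≤ ε) (hεE : ε ≤ E) :
    (exp (-ε) - exp (-(c + 1) * ε)) / c + (exp (-(c + 1) * ε) - exp (-(c + 1) * E)) / (c + 1)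
        - exp (-ε) * ∫ y in 0..E, exp (-c * y - ε / y)
      = ∫ y in 0..E, exp (-c * y) * (exp (-max y ε) - exp (-(ε + ε / y))) := by
  have hsing : ∫ y in 0..E, exp (-c * y) * exp (-(ε + ε / y))
      = exp (-ε) * ∫ y in 0..E, exp (-c * y - ε / y) := by
    rw [← intervalIntegral.integral_const_mul]
    congr 1 with y
    rw [← exp_add, ← exp_add]
    ring_nf
  simp_rw [mul_sub]
  rw [intervalIntegral.integral_sub (Continuous.intervalIntegrable (by fun_prop) 0 E)
      ((intervalIntegrable_exp_neg_add_div hε le_rfl (hε.trans hεE)).continuousOn_mul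
        (by fun_prop)),
    integral_exp_neg_mul_exp_neg_max hc hε hεE, hsing]

lemma sum_choose_mul_exp (n : ℕ) (y : ℝ) :
    ∑ i ∈ Finset.range (n + 1), (n.choose i : ℝ) * (-1) ^ i * exp (-(2 * i + 1) * y)
      = exp (-y) * (1 - exp (-2 * y)) ^ n := by
  rw [sub_eq_neg_add, add_pow, Finset.mul_sum]
  refine Finset.sum_congr rfl fun i _ => ?_
  rw [show -(2 * (i : ℝ) + 1) * y = -y + i * (-2 * y) by ring, exp_add, exp_nat_mul]
  ring

lemma sum_bracket_eq_integral (M : ℕ) (hM : 1 ≤ M) {ε E : ℝ} (hε : 0 ≤ ε) (hεE : ε ≤ E) :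
    ∑ i ∈ Finset.range M, ((M - 1).choose i : ℝ) * (-1) ^ i *
        ((exp (-ε) - exp (-(2 * (i : ℝ) + 2) * ε)) / (2 * (i : ℝ) + 1)
          + (exp (-(2 * (i : ℝ) + 2) * ε) - exp (-(2 * (i : ℝ) + 2) * E)) / (2 * (i : ℝ) + 2)
          - exp (-ε) * ∫ y in 0..E, exp (-(2 * (i : ℝ) + 1) * y - ε / y))
      = ∫ y in 0..E, q2Integrand (M - 1) ε y := by
  obtain ⟨n, rfl⟩ := Nat.exists_eq_add_of_le' hM
  have hterm (i : ℕ) := bracket_eq_integral (c := 2 * i + 1) (by positivity) hε hεE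
  simp only [show ∀ i : ℕ, 2 * (i : ℝ) + 2 = 2 * i + 1 + 1 from fun i => by ring, hterm]
  simp only [← intervalIntegral.integral_const_mul, Nat.add_sub_cancel]
  rw [← intervalIntegral.integral_finsetSum fun i _ =>
    ((intervalIntegrable_exp_neg_max_sub hε le_rfl (hε.trans hεE)).continuousOn_mul
      (by fun_prop)).const_mul _]
  congr 1 with y
  rw [q2Integrand, ← sum_choose_mul_exp, Finset.sum_mul]
  refine Finset.sum_congr rfl fun i _ => ?_
  ring

lemma intervalIntegrable_q2Integrand (n : ℕ) {ε a b : ℝ} (hε : 0 ≤ ε) (ha : 0 ≤ a)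
    (hb : 0 ≤ b) :
    IntervalIntegrable (q2Integrand n ε) volume a b :=
  (intervalIntegrable_exp_neg_max_sub hε ha hb).continuousOn_mul (by fun_prop)

lemma one_sub_exp_neg_two_mul_nonneg {y : ℝ} (hy : 0 ≤ y) : 0 ≤ 1 - exp (-2 * y) := by
  rw [sub_nonneg, exp_le_one_iff]
  linarith

lemma q2Integrand_nonneg (n : ℕ) {ε y : ℝ} (hε : 0 ≤ ε) (hy : 0 ≤ y) (hyε : y ≤ eps0 ε) :
    0 ≤ q2Integrand n ε y := by
  have hdiff : 0 ≤ exp (-max y ε) - exp (-(ε + ε / y)) := by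
    rw [sub_nonneg, exp_le_exp, neg_le_neg_iff]
    exact max_le_add_div hε hy hyε
  have := one_sub_exp_neg_two_mul_nonneg hy
  unfold q2Integrand
  positivity

lemma q2Integrand_le {n : ℕ} (hn : 1 ≤ n) {ε y : ℝ} (hε : 0 ≤ ε) (hy : 0 ≤ y) (hy1 : y ≤ 1) :
    q2Integrand n ε y ≤ 2 ^ (n + 1) * ε * y ^ (n - 1) := by
  obtain ⟨m, rfl⟩ := Nat.exists_eq_add_of_le' hn
  rcases hy.eq_or_lt with rfl | hy
  · simp only [q2Integrand, mul_zero, exp_zero, sub_self, zero_pow m.succ_ne_zero, zero_mul]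
    positivity
  have hfactor : exp (-y) * (1 - exp (-2 * y)) ^ (m + 1) ≤ (2 * y) ^ (m + 1) := by
    have h0 := one_sub_exp_neg_two_mul_nonneg hy.le
    calc exp (-y) * (1 - exp (-2 * y)) ^ (m + 1) ≤ 1 * (2 * y) ^ (m + 1) := by
          gcongr
          · exact exp_le_one_iff.mpr (by linarith)
          · linarith [add_one_le_exp (-2 * y)]
      _ = (2 * y) ^ (m + 1) := one_mul _
  have hdiff : exp (-max y ε) - exp (-(ε + ε / y)) ≤ ε + ε / y := by
    have : exp (-max y ε) ≤ 1 := exp_le_one_iff.mpr (by simp [hy.le])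
    linarith [add_one_le_exp (-(ε + ε / y))]
  calc q2Integrand (m + 1) ε y
      ≤ exp (-y) * (1 - exp (-2 * y)) ^ (m + 1) * (ε + ε / y) := by
        have := one_sub_exp_neg_two_mul_nonneg hy.le
        unfold q2Integrand
        gcongr
    _ ≤ (2 * y) ^ (m + 1) * (ε + ε / y) := by gcongr
    _ = 2 ^ (m + 1) * ε * y ^ m * (y + 1) := by
        field_simp
        ring
    _ ≤ 2 ^ (m + 1 + 1) * ε * y ^ (m + 1 - 1) := by
        rw [Nat.add_sub_cancel, pow_succ 2 (m + 1)]
        have : 0 ≤ 2 ^ (m + 1) * ε * y ^ m := by positivity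
        nlinarith

lemma le_q2Integrand (n : ℕ) {ε y : ℝ} (hy : 0 ≤ y) (hεy : ε ≤ y) (hy2 : y ≤ 1 / 2)
    (hyb : y ≤ ε + ε / y) (hb : ε + ε / y ≤ 1) :
    y ^ n * (ε + ε / y - y) / 8 ≤ q2Integrand n ε y := by
  set b := ε + ε / y
  have hA : 1 / 2 ≤ exp (-y) := by linarith [add_one_le_exp (-y)]
  have hB : y ≤ 1 - exp (-2 * y) := by
    have h1 := add_one_le_exp (2 * y)
    have h2 : exp (-2 * y) * exp (2 * y) = 1 := by rw [← exp_add]; simp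
    nlinarith [exp_pos (-2 * y)]
  have hC : (b - y) / 4 ≤ exp (-y) - exp (-b) := by
    have hb4 : 1 / 4 ≤ exp (-b) := by
      have : exp (-1) ≤ exp (-b) := exp_le_exp.mpr (by linarith)
      linarith [exp_neg_one_gt_d9]
    have h1 : exp (-y) = exp (-b) * exp (b - y) := by rw [← exp_add]; ring_nf
    have h2 := add_one_le_exp (b - y)
    nlinarith
  calc y ^ n * (b - y) / 8 = 1 / 2 * y ^ n * ((b - y) / 4) := by ring
    _ ≤ exp (-y) * (1 - exp (-2 * y)) ^ n * (exp (-y) - exp (-b)) := by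
        have := hy.trans hB
        gcongr
    _ = q2Integrand n ε y := by rw [q2Integrand, max_eq_left hεy]

lemma integral_q2Integrand_le {n : ℕ} (hn : 1 ≤ n) {ε : ℝ} (hε : 0 ≤ ε) (hε1 : ε ≤ 1 / 4) :
    ∫ y in 0..eps0 ε, q2Integrand n ε y ≤ 2 ^ (2 * n + 1) * √ε ^ (n + 2) := by
  set E := eps0 ε
  have hE2 : E ≤ 2 * √ε := eps0_le_two_mul_sqrt hε (by linarith)
  have hsqrt : √ε ≤ 1 / 2 := sqrt_le_iff.mpr ⟨by norm_num, by linarith⟩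
  have hE0 : 0 ≤ E := hε.trans (le_eps0 hε)
  have hn0 : (1 : ℝ) ≤ n := by exact_mod_cast hn
  calc ∫ y in 0..E, q2Integrand n ε y
      ≤ ∫ y in 0..E, 2 ^ (n + 1) * ε * y ^ (n - 1) :=
        intervalIntegral.integral_mono_on hE0 (intervalIntegrable_q2Integrand n hε le_rfl hE0)
          (Continuous.intervalIntegrable (by fun_prop) _ _)
          fun y hy => q2Integrand_le hn hε hy.1 (by linarith [hy.2])
    _ = 2 ^ (n + 1) * ε * (E ^ n / n) := by
        rw [intervalIntegral.integral_const_mul, integral_pow, Nat.sub_add_cancel hn,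
          zero_pow (by omega), sub_zero, Nat.cast_sub hn]
        push_cast
        ring
    _ ≤ 2 ^ (n + 1) * ε * (2 * √ε) ^ n := by
        gcongr
        exact (div_le_self (by positivity) hn0).trans (by gcongr)
    _ = 2 ^ (2 * n + 1) * √ε ^ (n + 2) := by
        rw [mul_pow, pow_add _ n 2, sq_sqrt hε]
        ring

lemma le_integral_q2Integrand (n : ℕ) {ε : ℝ} (hε : 0 < ε) (hε1 : ε ≤ 1 / 64) :
    √ε ^ (n + 2) / (64 * 4 ^ n) ≤ ∫ y in 0..eps0 ε, q2Integrand n ε y := by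
  set E := eps0 ε
  set s := √ε
  have hs0 : 0 < s := sqrt_pos.mpr hε
  have hs2 : s ^ 2 = ε := sq_sqrt hε.le
  have hs8 : s ≤ 1 / 8 := sqrt_le_iff.mpr ⟨by norm_num, by linarith⟩
  have hsE : s ≤ E := sqrt_le_eps0 hε.le
  have hE2 : E ≤ 2 * s := eps0_le_two_mul_sqrt hε.le (by linarith)
  have hE0 : 0 < E := hs0.trans_le hsE
  have hpoint : ∀ y ∈ Icc (E / 4) (E / 2), E ^ (n + 1) / (16 * 4 ^ n) ≤ q2Integrand n ε y := by
    rintro y ⟨hy1, hy2⟩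
    have hy0 : 0 < y := by linarith
    have hb : E ≤ ε + ε / y := eps0_le_add_div hε.le hy0 (by linarith)
    have hdiv : ε / y ≤ 1 / 2 := by
      rw [div_le_iff₀ hy0]
      nlinarith
    calc E ^ (n + 1) / (16 * 4 ^ n) = (E / 4) ^ n * (E - E / 2) / 8 := by
          rw [div_pow, pow_succ]
          field_simp
          ring
      _ ≤ y ^ n * (ε + ε / y - y) / 8 := by gcongr; linarith
      _ ≤ q2Integrand n ε y :=
          le_q2Integrand n hy0.le (by nlinarith) (by linarith) (by linarith) (by linarith)
  calc s ^ (n + 2) / (64 * 4 ^ n) ≤ E ^ (n + 2) / (64 * 4 ^ n) := by gcongr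
    _ = ∫ y in E / 4..E / 2, E ^ (n + 1) / (16 * 4 ^ n) := by
        rw [intervalIntegral.integral_const, smul_eq_mul]
        ring
    _ ≤ ∫ y in E / 4..E / 2, q2Integrand n ε y :=
        intervalIntegral.integral_mono_on (by linarith) intervalIntegrable_const
          (intervalIntegrable_q2Integrand n hε.le (by positivity) (by positivity)) hpoint
    _ ≤ ∫ y in 0..E, q2Integrand n ε y :=
        intervalIntegral.integral_mono_interval (by positivity) (by linarith) (by linarith)
          ((ae_restrict_iff' measurableSet_Ioc).mpr (Eventually.of_forall fun y hy =>
            q2Integrand_nonneg n hε.le hy.1.le hy.2))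
          (intervalIntegrable_q2Integrand n hε.le le_rfl hE0.le)

lemma tendsto_log_div_log_of_le_of_le {f : ℝ → ℝ} {p c C : ℝ} (hc : 0 < c)
    (hf : ∀ᶠ x in 𝓝[>] 0, c * x ^ p ≤ f x ∧ f x ≤ C * x ^ p) :
    Tendsto (fun x => log (f x) / log x) (𝓝[>] 0) (𝓝 p) := by
  have hlim (K : ℝ) : Tendsto (fun x => p + log K / log x) (𝓝[>] 0) (𝓝 p) := by
    simpa using tendsto_const_nhds.add (tendsto_log_nhdsGT_zero.const_div_atBot (log K))
  have hsmall : ∀ᶠ x in 𝓝[>] (0 : ℝ), x ∈ Ioo 0 1 := Ioo_mem_nhdsGT one_pos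
  have hlog (K x : ℝ) (hK : 0 < K) (hx : 0 < x) (hx1 : x < 1) :
      log (K * x ^ p) / log x = p + log K / log x := by
    have := (log_neg hx hx1).ne
    rw [log_mul hK.ne' (rpow_pos_of_pos hx p).ne', log_rpow hx]
    field_simp
    ring
  refine tendsto_of_tendsto_of_tendsto_of_le_of_le' (hlim C) (hlim c) ?_ ?_ <;>
    filter_upwards [hf, hsmall] with x ⟨hlow, hup⟩ ⟨hx, hx1⟩
  · have hlow' : 0 < c * x ^ p := by positivity
    rw [← hlog C x (pos_of_mul_pos_left (hlow'.trans_le (hlow.trans hup)) (by positivity)) hx hx1]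
    exact div_le_div_of_nonpos_of_le (log_neg hx hx1).le (log_le_log (hlow'.trans_le hlow) hup)
  · rw [← hlog c x hc hx hx1]
    exact div_le_div_of_nonpos_of_le (log_neg hx hx1).le (log_le_log (by positivity) hlow)

/-- Fix `M ≥ 2`. With `ε₀(ε) = (ε + √(ε² + 4ε))/2` and
`Q₂(ε) = 2M Σ_{i=0}^{M−1} C(M−1,i) (−1)^i [ (e^{−ε} − e^{−(2i+2)ε})/(2i+1)
  + (e^{−(2i+2)ε} − e^{−(2i+2)ε₀})/(2i+2) − e^{−ε} ∫₀^{ε₀} e^{−(2i+1)y − ε/y} dy ]`,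
we have `lim_{ε→0⁺} log Q₂(ε)/log ε = (M+1)/2`. -/
theorem stmt10 (M : ℕ) (hM : 2 ≤ M) :
    Tendsto
      (fun ε : ℝ =>
        Real.log
            (2 * (M : ℝ) *
              ∑ i ∈ Finset.range M,
                ((M - 1).choose i : ℝ) * (-1) ^ i *
                  ((Real.exp (-ε) - Real.exp (-(2 * (i : ℝ) + 2) * ε)) / (2 * (i : ℝ) + 1)
                    + (Real.exp (-(2 * (i : ℝ) + 2) * ε)
                        - Real.exp (-(2 * (i : ℝ) + 2) * ((ε + Real.sqrt (ε ^ 2 + 4 * ε)) / 2)))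
                        / (2 * (i : ℝ) + 2)
                    - Real.exp (-ε) *
                        ∫ y in (0 : ℝ)..(ε + Real.sqrt (ε ^ 2 + 4 * ε)) / 2,
                          Real.exp (-(2 * (i : ℝ) + 1) * y - ε / y)))
          / Real.log ε)
      (𝓝[>] 0) (𝓝 (((M : ℝ) + 1) / 2)) := by
  have hM0 : (0 : ℝ) < M := Nat.cast_pos.mpr (by omega)
  refine tendsto_log_div_log_of_le_of_le (c := 2 * M / (64 * 4 ^ (M - 1)))
    (C := 2 * M * 2 ^ (2 * (M - 1) + 1)) (by positivity) ?_
  filter_upwards [Ioo_mem_nhdsGT (by norm_num : (0 : ℝ) < 1 / 64)] with ε ⟨hε, hε1⟩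
  have hpow : ε ^ (((M : ℝ) + 1) / 2) = √ε ^ (M - 1 + 2) := by
    rw [sqrt_eq_rpow, ← rpow_natCast, ← rpow_mul hε.le, show M - 1 + 2 = M + 1 by omega]
    push_cast
    ring_nf
  rw [show (ε + √(ε ^ 2 + 4 * ε)) / 2 = eps0 ε from rfl,
    sum_bracket_eq_integral M (by omega) hε.le (le_eps0 hε.le), hpow]
  have hlow := le_integral_q2Integrand (M - 1) hε hε1.le
  have hup := integral_q2Integrand_le (n := M - 1) (by omega) hε.le (by linarith)
  constructor
  · calc 2 * M / (64 * 4 ^ (M - 1)) * √ε ^ (M - 1 + 2)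
        = 2 * M * (√ε ^ (M - 1 + 2) / (64 * 4 ^ (M - 1))) := by ring
      _ ≤ _ := by gcongr
  · calc _ ≤ 2 * (M : ℝ) * (2 ^ (2 * (M - 1) + 1) * √ε ^ (M - 1 + 2)) := by gcongr
      _ = _ := by ring
end

section
/- Fix an integer M ≥ 2 and for ε > 0 set ε₀(ε) = (ε + √(ε² + 4ε))/2. Then lim_{ε→0⁺} M · (∫₀^{ε₀(ε)} y^{M−1} · e^{−ε/y} dy) / ε₀(ε)^M = 1. -/
/-!
On `(0, E]` the factor `e^{-ε/y}` lies between `1 - ε/y` and `1`, so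
`1 - (M/(M-1)) ε/E ≤ M E^{-M} ∫₀^E y^{M-1} e^{-ε/y} dy ≤ 1`.
For `E = ε₀(ε)` we have `ε₀(ε) ≥ √ε`, hence `ε/ε₀(ε) ≤ √ε → 0`, and the squeeze gives
the limit.
-/

open Filter Topology Real intervalIntegral

lemma exp_neg_div_le_one {ε y : ℝ} (hε : 0 ≤ ε) (hy : 0 ≤ y) : exp (-ε / y) ≤ 1 :=
  exp_le_one_iff.mpr (div_nonpos_of_nonpos_of_nonneg (neg_nonpos.mpr hε) hy)

lemma one_sub_div_le_exp_neg_div (ε y : ℝ) : 1 - ε / y ≤ exp (-ε / y) := by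
  linarith [add_one_le_exp (-ε / y), neg_div y ε]

lemma intervalIntegrable_pow_mul_exp_neg_div (n : ℕ) {ε E : ℝ} (hε : 0 ≤ ε)
    (hE : 0 ≤ E) :
    IntervalIntegrable (fun y => y ^ n * exp (-ε / y)) MeasureTheory.volume 0 E := by
  refine ((continuous_pow n).intervalIntegrable 0 E).mono_fun (by fun_prop) ?_
  rw [EventuallyLE, MeasureTheory.ae_restrict_iff' measurableSet_uIoc]
  refine .of_forall fun y hy => ?_
  rw [Set.uIoc_of_le hE] at hy
  rw [norm_mul, norm_of_nonneg (exp_pos _).le]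
  exact mul_le_of_le_one_right (norm_nonneg _) (exp_neg_div_le_one hε hy.1.le)

lemma integral_pow_mul_exp_neg_div_le (n : ℕ) {ε E : ℝ} (hε : 0 ≤ ε) (hE : 0 ≤ E) :
    ∫ y in (0 : ℝ)..E, y ^ n * exp (-ε / y) ≤ E ^ (n + 1) / (n + 1) := by
  calc ∫ y in (0 : ℝ)..E, y ^ n * exp (-ε / y)
      ≤ ∫ y in (0 : ℝ)..E, y ^ n := by
        refine integral_mono_on_of_le_Ioo hE
          (intervalIntegrable_pow_mul_exp_neg_div n hε hE) (intervalIntegrable_pow n) ?_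
        intro y hy
        exact mul_le_of_le_one_right (pow_nonneg hy.1.le n) (exp_neg_div_le_one hε hy.1.le)
    _ = E ^ (n + 1) / (n + 1) := by simp [integral_pow]

lemma sub_le_integral_pow_succ_mul_exp_neg_div (n : ℕ) {ε E : ℝ} (hε : 0 ≤ ε)
    (hE : 0 ≤ E) :
    E ^ (n + 2) / (n + 2) - ε * (E ^ (n + 1) / (n + 1)) ≤
      ∫ y in (0 : ℝ)..E, y ^ (n + 1) * exp (-ε / y) := by
  calc E ^ (n + 2) / (n + 2) - ε * (E ^ (n + 1) / (n + 1))
      = ∫ y in (0 : ℝ)..E, (y ^ (n + 1) - ε * y ^ n) := by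
        rw [integral_sub (intervalIntegrable_pow _)
          ((intervalIntegrable_pow _).const_mul ε), integral_const_mul,
          integral_pow, integral_pow]
        push_cast
        ring
    _ ≤ ∫ y in (0 : ℝ)..E, y ^ (n + 1) * exp (-ε / y) := by
        refine integral_mono_on_of_le_Ioo hE
          ((intervalIntegrable_pow _).sub ((intervalIntegrable_pow _).const_mul ε))
          (intervalIntegrable_pow_mul_exp_neg_div (n + 1) hε hE) fun y hy => ?_
        have hy : 0 < y := hy.1
        calc y ^ (n + 1) - ε * y ^ n = y ^ (n + 1) * (1 - ε / y) := by
              field_simp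
              ring
          _ ≤ y ^ (n + 1) * exp (-ε / y) := by
              gcongr
              exact one_sub_div_le_exp_neg_div ε y

lemma mul_integral_pow_mul_exp_neg_div_div_le_one (n : ℕ) {ε E : ℝ} (hε : 0 ≤ ε)
    (hE : 0 < E) :
    (n + 1) * (∫ y in (0 : ℝ)..E, y ^ n * exp (-ε / y)) / E ^ (n + 1) ≤ 1 := by
  rw [div_le_one (by positivity), ← le_div_iff₀' (by positivity)]
  exact integral_pow_mul_exp_neg_div_le n hε hE.le

lemma one_sub_mul_div_le_mul_integral_pow_mul_exp_neg_div_div (n : ℕ) {ε E : ℝ}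
    (hε : 0 ≤ ε) (hE : 0 < E) :
    1 - (n + 2) / (n + 1) * (ε / E) ≤
      (n + 2) * (∫ y in (0 : ℝ)..E, y ^ (n + 1) * exp (-ε / y)) / E ^ (n + 2) := by
  have h := sub_le_integral_pow_succ_mul_exp_neg_div n hε hE.le
  rw [le_div_iff₀ (by positivity)]
  calc (1 - (n + 2) / (n + 1) * (ε / E)) * E ^ (n + 2)
      = (n + 2) * (E ^ (n + 2) / (n + 2) - ε * (E ^ (n + 1) / (n + 1))) := by
        field_simp
        ring
    _ ≤ _ := by gcongr

lemma sqrt_le_half_add_sqrt_sq_add_four_mul {ε : ℝ} (hε : 0 ≤ ε) :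
    √ε ≤ (ε + √(ε ^ 2 + 4 * ε)) / 2 := by
  have h4 : √(4 * ε) = 2 * √ε := by
    rw [sqrt_mul' 4 hε, show (4 : ℝ) = 2 ^ 2 by norm_num, sqrt_sq zero_le_two]
  have : √(4 * ε) ≤ √(ε ^ 2 + 4 * ε) := sqrt_le_sqrt (by nlinarith)
  linarith

lemma tendsto_div_half_add_sqrt_sq_add_four_mul :
    Tendsto (fun ε : ℝ => ε / ((ε + √(ε ^ 2 + 4 * ε)) / 2)) (𝓝[>] 0) (𝓝 0) := by
  have hsqrt : Tendsto (fun ε : ℝ => √ε) (𝓝[>] 0) (𝓝 0) := by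
    simpa using (continuous_sqrt.tendsto 0).mono_left nhdsWithin_le_nhds
  refine tendsto_of_tendsto_of_tendsto_of_le_of_le' tendsto_const_nhds hsqrt ?_ ?_ <;>
    filter_upwards [self_mem_nhdsWithin] with ε (hε : 0 < ε)
  · positivity
  · calc ε / ((ε + √(ε ^ 2 + 4 * ε)) / 2) ≤ ε / √ε :=
        div_le_div_of_nonneg_left hε.le (sqrt_pos.mpr hε)
          (sqrt_le_half_add_sqrt_sq_add_four_mul hε.le)
      _ = √ε := div_sqrt

/-- Fix `M ≥ 2` and set `ε₀(ε) = (ε + √(ε² + 4ε))/2` for `ε > 0`. Then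
`lim_{ε→0⁺} M (∫₀^{ε₀(ε)} y^{M−1} e^{−ε/y} dy) / ε₀(ε)^M = 1`. -/
theorem stmt12 (M : ℕ) (hM : 2 ≤ M) :
    Tendsto
      (fun ε : ℝ =>
        (M : ℝ) *
            (∫ y in (0 : ℝ)..(ε + Real.sqrt (ε ^ 2 + 4 * ε)) / 2,
              y ^ (M - 1) * Real.exp (-ε / y))
          / ((ε + Real.sqrt (ε ^ 2 + 4 * ε)) / 2) ^ M)
      (𝓝[>] 0) (𝓝 1) := by
  obtain ⟨n, rfl⟩ : ∃ n, M = n + 2 := ⟨M - 2, by omega⟩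
  have hlower : Tendsto
      (fun ε : ℝ => 1 - (n + 2) / (n + 1) * (ε / ((ε + √(ε ^ 2 + 4 * ε)) / 2)))
      (𝓝[>] 0) (𝓝 1) := by
    simpa using
      (tendsto_div_half_add_sqrt_sq_add_four_mul.const_mul ((n + 2) / (n + 1) : ℝ)).const_sub 1
  have hpos : ∀ᶠ ε in 𝓝[>] (0 : ℝ), 0 < ε ∧ 0 < (ε + √(ε ^ 2 + 4 * ε)) / 2 := by
    filter_upwards [self_mem_nhdsWithin] with ε (hε : 0 < ε)
    exact ⟨hε, by positivity⟩
  refine tendsto_of_tendsto_of_tendsto_of_le_of_le' hlower tendsto_const_nhds ?_ ?_ <;>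
    filter_upwards [hpos] with ε ⟨hε, hE⟩
  · exact_mod_cast one_sub_mul_div_le_mul_integral_pow_mul_exp_neg_div_div n hε.le hE
  · exact_mod_cast mul_integral_pow_mul_exp_neg_div_div_le_one (n + 1) hε.le hE
end

section
/- Fix integers 1 ≤ n ≤ M and define T(t) = n · ∫₀^∞ e^{−y} · (1 − e^{−y})^{n−1} · (1 − e^{−t/y})^M dy for t > 0. Then lim_{t→0⁺} log T(t) / log t = n. -/
/-!
For `0 < t ≤ 1` the integral is squeezed between `c * t ^ n` and `t ^ n * (2 - log t)`. On
`y ≤ t` the factor `1 - exp (-t / y)` is at least `1 - exp (-1)` and the integrand is comparable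
to `y ^ (n - 1)`, which gives the lower bound. On `y > t`, `1 - exp (-t / y) ≤ t / y` and
`M ≥ n` bound the integrand by `t ^ n * exp (-y) / y`, whose integral over `(t, ∞)` is at most
`1 - log t`. After taking logarithms both the constant and the factor `2 - log t` are
`o(log t)`.
-/

open Filter Topology Set MeasureTheory Real

lemma one_sub_exp_neg_nonneg {x : ℝ} (hx : 0 ≤ x) : 0 ≤ 1 - exp (-x) := by
  linarith [exp_le_one_iff.2 (neg_nonpos.2 hx)]

lemma one_sub_exp_neg_le_one (x : ℝ) : 1 - exp (-x) ≤ 1 := by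
  linarith [exp_pos (-x)]

lemma one_sub_exp_neg_le_self (x : ℝ) : 1 - exp (-x) ≤ x := by
  linarith [one_sub_le_exp_neg x]

lemma mul_exp_neg_le_one_sub_exp_neg (x : ℝ) : x * exp (-x) ≤ 1 - exp (-x) := by
  have h := mul_le_mul_of_nonneg_right (add_one_le_exp x) (exp_pos (-x)).le
  rw [← exp_add, add_neg_cancel, exp_zero] at h
  linarith

lemma integrableOn_exp_neg_div_self_Ioi {t : ℝ} (ht : 0 < t) :
    IntegrableOn (fun y => exp (-y) / y) (Ioi t) := by
  have hcont : ContinuousOn (fun y => exp (-y) / y) (Ioi t) :=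
    (continuous_exp.comp continuous_neg).continuousOn.div continuousOn_id
      fun y hy => (ht.trans hy).ne'
  refine ((exp_neg_integrableOn_Ioi t one_pos).const_mul t⁻¹).mono'
    (hcont.aestronglyMeasurable measurableSet_Ioi) ?_
  filter_upwards [ae_restrict_mem measurableSet_Ioi] with y (hy : t < y)
  rw [norm_of_nonneg (div_nonneg (exp_pos _).le (ht.trans hy).le), neg_one_mul,
    div_eq_inv_mul]
  gcongr

lemma integral_exp_neg_div_self_Ioi_le {t : ℝ} (ht : 0 < t) (ht1 : t ≤ 1) :
    ∫ y in Ioi t, exp (-y) / y ≤ 1 - log t := by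
  have hI := integrableOn_exp_neg_div_self_Ioi ht
  rw [← Ioc_union_Ioi_eq_Ioi ht1, setIntegral_union (Ioc_disjoint_Ioi le_rfl) measurableSet_Ioi
    (hI.mono_set Ioc_subset_Ioi_self) (hI.mono_set (Ioi_subset_Ioi ht1))]
  have h0 : (0 : ℝ) ∉ uIcc t 1 := by
    rw [uIcc_of_le ht1]
    exact fun h => not_le.2 ht h.1
  have hnear : ∫ y in Ioc t 1, exp (-y) / y ≤ -log t := calc
    ∫ y in Ioc t 1, exp (-y) / y ≤ ∫ y in Ioc t 1, 1 / y := by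
      refine setIntegral_mono_on (hI.mono_set Ioc_subset_Ioi_self) ?_ measurableSet_Ioc
        fun y hy => ?_
      · exact (intervalIntegrable_iff_integrableOn_Ioc_of_le ht1).1
          (intervalIntegral.intervalIntegrable_one_div (fun y hy h => h0 (h ▸ hy))
            continuousOn_id)
      · have hy0 : 0 < y := ht.trans hy.1
        gcongr
        exact exp_le_one_iff.2 (by linarith)
    _ = -log t := by
      rw [← intervalIntegral.integral_of_le ht1, integral_one_div h0, one_div, log_inv]
  have hfar : ∫ y in Ioi 1, exp (-y) / y ≤ 1 := calc
    ∫ y in Ioi 1, exp (-y) / y ≤ ∫ y in Ioi 1, exp (-y) := by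
      refine setIntegral_mono_on (hI.mono_set (Ioi_subset_Ioi ht1))
        (by simpa using exp_neg_integrableOn_Ioi 1 one_pos) measurableSet_Ioi fun y hy => ?_
      exact div_le_self (exp_pos _).le (le_of_lt hy)
    _ = exp (-1) := integral_exp_neg_Ioi 1
    _ ≤ 1 := exp_le_one_iff.2 (by norm_num)
  linarith

lemma tendsto_log_mul_add_div_atTop {c : ℝ} (hc : 0 < c) (a : ℝ) :
    Tendsto (fun s => log (c * (a + s)) / s) atTop (𝓝 0) := by
  have hlin : Tendsto (fun s => c * (a + s)) atTop atTop :=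
    (tendsto_atTop_add_const_left _ a tendsto_id).const_mul_atTop hc
  have hlog : (fun s => log (c * (a + s))) =o[atTop] fun s => c * (a + s) :=
    isLittleO_log_id_atTop.comp_tendsto hlin
  have hbig : (fun s : ℝ => c * (a + s)) =O[atTop] fun s => s :=
    ((Asymptotics.isLittleO_const_id_atTop a).isBigO.add
      (Asymptotics.isBigO_refl _ _)).const_mul_left c
  exact (hlog.trans_isBigO hbig).tendsto_div_nhds_zero

lemma tendsto_log_mul_sub_log_div_log {c : ℝ} (hc : 0 < c) (a : ℝ) :
    Tendsto (fun t => log (c * (a - log t)) / log t) (𝓝[>] 0) (𝓝 0) := by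
  have h := ((tendsto_log_mul_add_div_atTop hc a).comp
    (tendsto_neg_atBot_atTop.comp tendsto_log_nhdsGT_zero)).neg
  simpa [Function.comp_def, div_neg, sub_eq_add_neg] using h

lemma log_mul_pow_div_log {v t : ℝ} (hv : 0 < v) (ht : 0 < t) (ht1 : t ≠ 1) (k : ℕ) :
    log (v * t ^ k) / log t = log v / log t + k := by
  rw [log_mul hv.ne' (pow_pos ht k).ne', log_pow, add_div, mul_div_assoc,
    div_self (log_ne_zero_of_pos_of_ne_one ht ht1), mul_one]

theorem tendsto_log_div_log_of_le_of_le_s16 {T l u : ℝ → ℝ} {k : ℕ}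
    (hl : Tendsto (fun t => log (l t) / log t) (𝓝[>] 0) (𝓝 0))
    (hu : Tendsto (fun t => log (u t) / log t) (𝓝[>] 0) (𝓝 0))
    (hl_pos : ∀ᶠ t in 𝓝[>] 0, 0 < l t)
    (hlT : ∀ᶠ t in 𝓝[>] 0, l t * t ^ k ≤ T t) (hTu : ∀ᶠ t in 𝓝[>] 0, T t ≤ u t * t ^ k) :
    Tendsto (fun t => log (T t) / log t) (𝓝[>] 0) (𝓝 k) := by
  have hunit : ∀ᶠ t in 𝓝[>] (0 : ℝ), t ∈ Ioo 0 1 := Ioo_mem_nhdsGT one_pos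
  refine tendsto_of_tendsto_of_tendsto_of_le_of_le'
    (by simpa using hu.add_const (k : ℝ)) (by simpa using hl.add_const (k : ℝ)) ?_ ?_
  · filter_upwards [hunit, hl_pos, hlT, hTu] with t ⟨ht0, ht1⟩ hl0 hlT hTu
    have hT : 0 < T t := (mul_pos hl0 (pow_pos ht0 k)).trans_le hlT
    have hu0 : 0 < u t := pos_of_mul_pos_left (hT.trans_le hTu) (pow_pos ht0 k).le
    rw [← log_mul_pow_div_log hu0 ht0 ht1.ne]
    exact div_le_div_of_nonpos_of_le (log_neg ht0 ht1).le (log_le_log hT hTu)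
  · filter_upwards [hunit, hl_pos, hlT] with t ⟨ht0, ht1⟩ hl0 hlT
    rw [← log_mul_pow_div_log hl0 ht0 ht1.ne]
    exact div_le_div_of_nonpos_of_le (log_neg ht0 ht1).le
      (log_le_log (mul_pos hl0 (pow_pos ht0 k)) hlT)

/-- With `n = m + 1`, `n * outageIntegrand m M t y` is the density of `Y` at `y` times
`P(Z < t / y)`, so that `T(t) = n * ∫ y in Ioi 0, outageIntegrand (n - 1) M t y`. -/
noncomputable def outageIntegrand (m M : ℕ) (t y : ℝ) : ℝ :=
  exp (-y) * (1 - exp (-y)) ^ m * (1 - exp (-t / y)) ^ M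

namespace outageIntegrand

variable {m M : ℕ} {t y : ℝ}

lemma nonneg (ht : 0 ≤ t) (hy : 0 < y) : 0 ≤ outageIntegrand m M t y := by
  have := one_sub_exp_neg_nonneg hy.le
  have := one_sub_exp_neg_nonneg (div_nonneg ht hy.le)
  unfold outageIntegrand; rw [neg_div]; positivity

lemma le_exp_neg (ht : 0 ≤ t) (hy : 0 < y) : outageIntegrand m M t y ≤ exp (-y) := by
  have := one_sub_exp_neg_nonneg hy.le
  have := one_sub_exp_neg_nonneg (div_nonneg ht hy.le)
  unfold outageIntegrand
  rw [neg_div]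
  calc exp (-y) * (1 - exp (-y)) ^ m * (1 - exp (-(t / y))) ^ M
      ≤ exp (-y) * 1 ^ m * 1 ^ M := by
        gcongr <;> exact one_sub_exp_neg_le_one _
    _ = exp (-y) := by ring

lemma le_pow (ht : 0 ≤ t) (hy : 0 < y) : outageIntegrand m M t y ≤ y ^ m := by
  have := one_sub_exp_neg_nonneg hy.le
  have := one_sub_exp_neg_nonneg (div_nonneg ht hy.le)
  have : exp (-y) ≤ 1 := exp_le_one_iff.2 (by linarith)
  unfold outageIntegrand
  rw [neg_div]
  calc exp (-y) * (1 - exp (-y)) ^ m * (1 - exp (-(t / y))) ^ M ≤ 1 * y ^ m * 1 ^ M := by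
        gcongr
        exacts [one_sub_exp_neg_le_self y, one_sub_exp_neg_le_one _]
    _ = y ^ m := by ring

lemma le_pow_mul_exp_neg_div (hmM : m + 1 ≤ M) (ht : 0 ≤ t) (hy : 0 < y) :
    outageIntegrand m M t y ≤ t ^ (m + 1) * (exp (-y) / y) := by
  unfold outageIntegrand
  rw [neg_div]
  have hty := one_sub_exp_neg_nonneg (div_nonneg ht hy.le)
  calc exp (-y) * (1 - exp (-y)) ^ m * (1 - exp (-(t / y))) ^ M
      ≤ exp (-y) * y ^ m * (t / y) ^ (m + 1) := by
        gcongr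
        · exact one_sub_exp_neg_nonneg hy.le
        · exact one_sub_exp_neg_le_self y
        · exact (pow_le_pow_of_le_one hty (one_sub_exp_neg_le_one _) hmM).trans
            (pow_le_pow_left₀ hty (one_sub_exp_neg_le_self _) _)
    _ = t ^ (m + 1) * (exp (-y) / y) := by
        rw [div_pow, pow_succ y]
        field_simp

lemma const_mul_pow_le (ht1 : t ≤ 1) (hy : y ∈ Ioc 0 t) :
    exp (-1) ^ (m + 1) * (1 - exp (-1)) ^ M * y ^ m ≤ outageIntegrand m M t y := by
  obtain ⟨hy0, hyt⟩ := hy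
  have he : exp (-1) ≤ exp (-y) := exp_le_exp.2 (by linarith)
  have := one_sub_exp_neg_nonneg (zero_le_one' ℝ)
  have := one_sub_exp_neg_nonneg hy0.le
  have hty : 1 ≤ t / y := (one_le_div hy0).2 hyt
  unfold outageIntegrand
  rw [neg_div]
  calc exp (-1) ^ (m + 1) * (1 - exp (-1)) ^ M * y ^ m
      = exp (-1) * (y * exp (-1)) ^ m * (1 - exp (-1)) ^ M := by ring
    _ ≤ exp (-y) * (1 - exp (-y)) ^ m * (1 - exp (-(t / y))) ^ M := by
        gcongr
        exact (mul_le_mul_of_nonneg_left he hy0.le).trans (mul_exp_neg_le_one_sub_exp_neg y)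

variable (m M t) in
lemma continuousOn : ContinuousOn (outageIntegrand m M t) (Ioi 0) := by
  have hdiv : ContinuousOn (fun y => -t / y) (Ioi 0) :=
    continuousOn_const.div continuousOn_id fun y hy => ne_of_gt hy
  unfold outageIntegrand
  fun_prop

lemma integrableOn (ht : 0 ≤ t) : IntegrableOn (outageIntegrand m M t) (Ioi 0) := by
  refine (exp_neg_integrableOn_Ioi 0 one_pos).mono'
    ((continuousOn m M t).aestronglyMeasurable measurableSet_Ioi) ?_
  filter_upwards [ae_restrict_mem measurableSet_Ioi] with y (hy : 0 < y)
  rw [norm_of_nonneg (nonneg ht hy), neg_one_mul]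
  exact le_exp_neg ht hy

variable (m M) in
lemma exists_pos_mul_pow_le_integral :
    ∃ c > 0, ∀ t ∈ Ioc (0 : ℝ) 1, c * t ^ (m + 1) ≤ ∫ y in Ioi 0, outageIntegrand m M t y := by
  set a := exp (-1) ^ (m + 1) * (1 - exp (-1)) ^ M
  have ha : 0 < a := by
    have : exp (-1) < 1 := exp_lt_one_iff.2 (by norm_num)
    have := exp_pos (-1)
    positivity
  refine ⟨a / (m + 1), by positivity, fun t ⟨ht0, ht1⟩ => ?_⟩
  have hI := integrableOn (m := m) (M := M) ht0.le
  calc a / (m + 1) * t ^ (m + 1) = ∫ y in Ioc 0 t, a * y ^ m := by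
        rw [integral_const_mul, ← intervalIntegral.integral_of_le ht0.le, integral_pow]
        ring
    _ ≤ ∫ y in Ioc 0 t, outageIntegrand m M t y :=
        setIntegral_mono_on (continuous_const.mul (continuous_pow m)).integrableOn_Ioc
          (hI.mono_set Ioc_subset_Ioi_self) measurableSet_Ioc fun y hy => const_mul_pow_le ht1 hy
    _ ≤ ∫ y in Ioi 0, outageIntegrand m M t y := by
        refine setIntegral_mono_set hI ?_ Ioc_subset_Ioi_self.eventuallyLE
        filter_upwards [ae_restrict_mem measurableSet_Ioi] with y (hy : 0 < y)
        exact nonneg ht0.le hy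

lemma integral_le_pow_mul (hmM : m + 1 ≤ M) (ht : 0 < t) (ht1 : t ≤ 1) :
    ∫ y in Ioi 0, outageIntegrand m M t y ≤ t ^ (m + 1) * (2 - log t) := by
  have hI := integrableOn (m := m) (M := M) ht.le
  rw [← Ioc_union_Ioi_eq_Ioi ht.le, setIntegral_union (Ioc_disjoint_Ioi le_rfl)
    measurableSet_Ioi (hI.mono_set Ioc_subset_Ioi_self) (hI.mono_set (Ioi_subset_Ioi ht.le))]
  have hnear : ∫ y in Ioc 0 t, outageIntegrand m M t y ≤ t ^ (m + 1) := calc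
    ∫ y in Ioc 0 t, outageIntegrand m M t y ≤ ∫ y in Ioc 0 t, y ^ m :=
      setIntegral_mono_on (hI.mono_set Ioc_subset_Ioi_self) (continuous_pow m).integrableOn_Ioc
        measurableSet_Ioc fun y hy => le_pow ht.le hy.1
    _ = t ^ (m + 1) / (m + 1) := by
      rw [← intervalIntegral.integral_of_le ht.le, integral_pow, zero_pow (Nat.succ_ne_zero m),
        sub_zero]
    _ ≤ t ^ (m + 1) := div_le_self (by positivity) (by simp)
  have hfar : ∫ y in Ioi t, outageIntegrand m M t y ≤ t ^ (m + 1) * (1 - log t) := calc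
    ∫ y in Ioi t, outageIntegrand m M t y ≤ ∫ y in Ioi t, t ^ (m + 1) * (exp (-y) / y) :=
      setIntegral_mono_on (hI.mono_set (Ioi_subset_Ioi ht.le))
        ((integrableOn_exp_neg_div_self_Ioi ht).const_mul _) measurableSet_Ioi
        fun y hy => le_pow_mul_exp_neg_div hmM ht.le (ht.trans hy)
    _ ≤ t ^ (m + 1) * (1 - log t) := by
      rw [integral_const_mul]
      gcongr
      exact integral_exp_neg_div_self_Ioi_le ht ht1
  linarith

end outageIntegrand

/-- Fix integers `1 ≤ n ≤ M` and define
`T(t) = n ∫₀^∞ e^{−y} (1 − e^{−y})^{n−1} (1 − e^{−t/y})^M dy` for `t > 0`. Then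
`lim_{t→0⁺} log T(t)/log t = n`. -/
theorem stmt16 (M n : ℕ) (hn : 1 ≤ n) (hnM : n ≤ M) :
    Tendsto
      (fun t : ℝ =>
        Real.log
            ((n : ℝ) *
              ∫ y in Set.Ioi (0 : ℝ),
                Real.exp (-y) * (1 - Real.exp (-y)) ^ (n - 1) * (1 - Real.exp (-t / y)) ^ M)
          / Real.log t)
      (𝓝[>] 0) (𝓝 n) := by
  obtain ⟨m, rfl⟩ : ∃ m, n = m + 1 := ⟨n - 1, by omega⟩
  obtain ⟨c, hc, hlower⟩ := outageIntegrand.exists_pos_mul_pow_le_integral m M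
  have hunit : ∀ᶠ t in 𝓝[>] (0 : ℝ), t ∈ Ioc 0 1 := Ioc_mem_nhdsGT one_pos
  have hN : (0 : ℝ) < (m + 1 : ℕ) := Nat.cast_pos.2 m.succ_pos
  refine tendsto_log_div_log_of_le_of_le_s16 (l := fun _ => (m + 1 : ℕ) * c)
    (u := fun t => (m + 1 : ℕ) * (2 - log t))
    (tendsto_log_nhdsGT_zero.const_div_atBot _) (tendsto_log_mul_sub_log_div_log hN 2)
    (Eventually.of_forall fun _ => mul_pos hN hc) ?_ ?_
  · filter_upwards [hunit] with t ht
    rw [Nat.add_sub_cancel, mul_assoc]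
    exact mul_le_mul_of_nonneg_left (hlower t ht) hN.le
  · filter_upwards [hunit] with t ⟨ht0, ht1⟩
    rw [Nat.add_sub_cancel, mul_assoc, mul_comm (2 - log t)]
    exact mul_le_mul_of_nonneg_left (outageIntegrand.integral_le_pow_mul hnM ht0 ht1) hN.le
end
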